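/- arXiv:2501.08595 — 7 statements merged into one kernel-verified Lean document; each statement's English description precedes it below -/
import Mathlib

section
/- A voting rule F on a rich domain of profiles satisfies Preferential Equality if and only if for any profile P and any n > 0, whenever 2n voters rank x immediately above y, for any partition of those voters into equal-sized groups I and J, the profile P^I obtained by all voters in I switching to rank y immediately above x, and the analogous profile P^J, satisfy F(P^I)=F(P^J). -/
/- Formalization of voting with ranked ballots (strict preference ballots).
A profile assigns to each voter in a finite voter set a binary relation
(intended: a strict weak order) on the candidate set `X`. -/

open scoped Classical

noncomputable section

structure Profile (V X : Type*) where
  voters : Finset V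
  ballot : V → X → X → Prop

variable {V X α : Type*}

namespace Profile

/-- Number of voters ranking `a` strictly above `b`. -/
def count (P : Profile V X) (a b : X) : ℕ :=
  (P.voters.filter (fun i => P.ballot i a b)).card

/-- The margin of `a` over `b`. -/
def margin (P : Profile V X) (a b : X) : ℤ :=
  (P.count a b : ℤ) - (P.count b a : ℤ)

/-- Replace the ballot of voter `i` by `R`. -/
def updBallot (P : Profile V X) (i : V) (R : X → X → Prop) : Profile V X :=
  ⟨P.voters, Function.update P.ballot i R⟩

/-- Add a new voter `i` with ballot `R`. -/
def addVoter (P : Profile V X) (i : V) (R : X → X → Prop) : Profile V X :=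
  ⟨insert i P.voters, Function.update P.ballot i R⟩

/-- Double a profile, giving each voter a twin (via the fresh injection `φ`)
with the same ballot. -/
def double [Nonempty V] (P : Profile V X) (φ : V → V) : Profile V X :=
  ⟨P.voters ∪ P.voters.image φ,
    fun i => if i ∈ P.voters then P.ballot i else P.ballot (Function.invFun φ i)⟩

end Profile

/-- `R` is a strict weak order: asymmetric and negatively transitive. -/
def IsSWO (R : X → X → Prop) : Prop :=
  (∀ a b, R a b → ¬ R b a) ∧ (∀ a b c, ¬ R a b → ¬ R b c → ¬ R a c)

/-- `R` is a (strict) linear order. -/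
def IsLin (R : X → X → Prop) : Prop :=
  IsSWO R ∧ ∀ a b, a ≠ b → R a b ∨ R b a

/-- `x` is ranked immediately above `y` in `R`. -/
def ImmAbove (R : X → X → Prop) (x y : X) : Prop :=
  R x y ∧ ∀ z, ¬ (R x z ∧ R z y)

/-- Flip the adjacent pair: `x` above `y` becomes `y` above `x`. -/
def flipPair (R : X → X → Prop) (x y : X) : X → X → Prop := fun a b =>
  if a = x ∧ b = y then False else if a = y ∧ b = x then True else R a b

/-- Voter `i` switches from ranking `x` immediately above `y` to ranking `y`
immediately above `x`. -/
def Profile.flipAt (P : Profile V X) (i : V) (x y : X) : Profile V X :=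
  P.updBallot i (flipPair (P.ballot i) x y)

/-- All voters in `I` switch from ranking `x` immediately above `y` to ranking
`y` immediately above `x`. -/
def Profile.flipSet (P : Profile V X) (I : Finset V) (x y : X) : Profile V X :=
  ⟨P.voters, fun i => if i ∈ I then flipPair (P.ballot i) x y else P.ballot i⟩

/-- The domain of all profiles (of strict weak orders). -/
def SWOProfiles (V X : Type*) : Set (Profile V X) :=
  {P | P.voters.Nonempty ∧ ∀ i ∈ P.voters, IsSWO (P.ballot i)}

/-- The domain of all linear profiles. -/
def LinProfiles (V X : Type*) : Set (Profile V X) :=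
  {P | P.voters.Nonempty ∧ ∀ i ∈ P.voters, IsLin (P.ballot i)}

/-- A linear order with bottom indifference: a strict weak order in which tied
candidates are not ranked strictly above any candidate. -/
def IsLOBI (R : X → X → Prop) : Prop :=
  IsSWO R ∧ ∀ x y, x ≠ y → ¬ R x y → ¬ R y x → ∀ z, ¬ R x z

/-- The LOBI domain. -/
def LOBIProfiles (V X : Type*) : Set (Profile V X) :=
  {P | P.voters.Nonempty ∧ ∀ i ∈ P.voters, IsLOBI (P.ballot i)}

/-- `Y` is a tie (non-singleton indifference class) of `R`. -/
def IsTie (R : X → X → Prop) (Y : Finset X) : Prop :=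
  2 ≤ Y.card ∧ (∀ x ∈ Y, ∀ y ∈ Y, ¬ R x y) ∧
    ∀ z, z ∉ Y → ∀ y ∈ Y, R z y ∨ R y z

/-- `L` is a strict linear order of the members of `Y` (confined to `Y`). -/
def StrictLinOn (L : X → X → Prop) (Y : Finset X) : Prop :=
  (∀ a b, L a b → a ∈ Y ∧ b ∈ Y) ∧ (∀ a, ¬ L a a) ∧
    (∀ a b c, L a b → L b c → L a c) ∧
    ∀ a ∈ Y, ∀ b ∈ Y, a ≠ b → L a b ∨ L b a

/-- Replace the tie `Y` in `R` by the linear order `L` of `Y`. -/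
def breakTie (R : X → X → Prop) (Y : Finset X) (L : X → X → Prop) :
    X → X → Prop := fun a b => R a b ∨ (a ∈ Y ∧ b ∈ Y ∧ L a b)

/-- A domain is rich if it is closed under flipping two adjacent candidates
in a voter's ranking. -/
def Rich (D : Set (Profile V X)) : Prop :=
  ∀ P ∈ D, ∀ i ∈ P.voters, ∀ x y : X,
    ImmAbove (P.ballot i) x y → P.flipAt i x y ∈ D

/-- Preferential Equality. -/
def PrefEqual (D : Set (Profile V X)) (F : Profile V X → α) : Prop :=
  ∀ P ∈ D, ∀ x y : X, ∀ i ∈ P.voters, ∀ j ∈ P.voters, i ≠ j →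
    ImmAbove (P.ballot i) x y → ImmAbove (P.ballot j) x y →
    P.flipAt i x y ∈ D → P.flipAt j x y ∈ D →
    F (P.flipAt i x y) = F (P.flipAt j x y)

/-- Preferential Compensation. -/
def PrefComp (D : Set (Profile V X)) (F : Profile V X → α) : Prop :=
  ∀ P ∈ D, ∀ x y : X, ∀ i ∈ P.voters, ∀ j ∈ P.voters, i ≠ j →
    ImmAbove (P.ballot i) x y → ImmAbove (P.ballot j) y x →
    (P.flipAt i x y).flipAt j y x ∈ D →
    F P = F ((P.flipAt i x y).flipAt j y x)

/-- Neutral Reversal: adding a reversal pair of linear ballots does not change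
the outcome. -/
def NeutralReversal (D : Set (Profile V X)) (F : Profile V X → α) : Prop :=
  ∀ P ∈ D, ∀ i j : V, i ∉ P.voters → j ∉ P.voters → i ≠ j →
    ∀ R : X → X → Prop, IsLin R →
    (P.addVoter i R).addVoter j (fun a b => R b a) ∈ D →
    F P = F ((P.addVoter i R).addVoter j (fun a b => R b a))

/-- Nonlinear Neutral Reversal: adding a reversal pair of strict weak order
ballots does not change the outcome. -/
def NonlinearNeutralReversal (D : Set (Profile V X)) (F : Profile V X → α) : Prop :=
  ∀ P ∈ D, ∀ i j : V, i ∉ P.voters → j ∉ P.voters → i ≠ j →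
    ∀ R : X → X → Prop, IsSWO R →
    (P.addVoter i R).addVoter j (fun a b => R b a) ∈ D →
    F P = F ((P.addVoter i R).addVoter j (fun a b => R b a))

/-- Tiebreaking Compensation. -/
def TiebreakComp (D : Set (Profile V X)) (F : Profile V X → α) : Prop :=
  ∀ P ∈ D, ∀ i ∈ P.voters, ∀ j ∈ P.voters, i ≠ j →
    ∀ (Y : Finset X) (L : X → X → Prop),
    IsTie (P.ballot i) Y → IsTie (P.ballot j) Y → StrictLinOn L Y →
    (P.updBallot i (breakTie (P.ballot i) Y L)).updBallot j
        (breakTie (P.ballot j) Y (fun a b => L b a)) ∈ D →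
    F P = F ((P.updBallot i (breakTie (P.ballot i) Y L)).updBallot j
        (breakTie (P.ballot j) Y (fun a b => L b a)))

/-- Neutral Indifference: adding one voter with the fully indifferent (empty)
ballot does not change the outcome. -/
def NeutralIndifference (D : Set (Profile V X)) (F : Profile V X → α) : Prop :=
  ∀ P ∈ D, ∀ i : V, i ∉ P.voters →
    P.addVoter i (fun _ _ => False) ∈ D →
    F P = F (P.addVoter i (fun _ _ => False))

/-- Homogeneity: doubling the profile (with fresh voters) does not change the
outcome. -/
def Homogeneous [Nonempty V] (D : Set (Profile V X)) (F : Profile V X → α) : Prop :=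
  ∀ P ∈ D, ∀ φ : V → V, Function.Injective φ → (∀ i, φ i ∉ P.voters) →
    P.double φ ∈ D → F P = F (P.double φ)

/-- Head-to-head voting rule: the outcome is determined by the pairwise
support counts together with the number of voters. -/
def HeadToHead (D : Set (Profile V X)) (F : Profile V X → α) : Prop :=
  ∀ P ∈ D, ∀ Q ∈ D, (∀ a b : X, P.count a b = Q.count a b) →
    P.voters.card = Q.voters.card → F P = F Q

/-- C2 voting rule: the outcome is determined by the pairwise support counts. -/
def C2 (D : Set (Profile V X)) (F : Profile V X → α) : Prop :=
  ∀ P ∈ D, ∀ Q ∈ D, (∀ a b : X, P.count a b = Q.count a b) → F P = F Q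

/-- Margin-based voting rule. -/
def MarginBased (D : Set (Profile V X)) (F : Profile V X → α) : Prop :=
  ∀ P ∈ D, ∀ Q ∈ D, (∀ a b : X, P.margin a b = Q.margin a b) → F P = F Q

lemma flipSet_ballot (P : Profile V X) (I : Finset V) (x y : X) (k : V) :
    (P.flipSet I x y).ballot k =
      if k ∈ I then flipPair (P.ballot k) x y else P.ballot k := rfl

lemma flipSet_voters (P : Profile V X) (I : Finset V) (x y : X) :
    (P.flipSet I x y).voters = P.voters := rfl

lemma flipSet_empty (P : Profile V X) (x y : X) : P.flipSet ∅ x y = P := by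
  cases P with
  | mk v b => simp [Profile.flipSet]

lemma flipAt_eq (P : Profile V X) (i : V) (x y : X) :
    P.flipAt i x y = P.flipSet {i} x y := by
  cases P with
  | mk v b =>
    simp only [Profile.flipAt, Profile.updBallot, Profile.flipSet, Profile.mk.injEq, true_and]
    funext k
    by_cases h : k = i
    · subst h; simp [Function.update]
    · simp [Function.update, h]

lemma flipSet_flipSet (P : Profile V X) (S T : Finset V) (x y : X) (h : Disjoint S T) :
    (P.flipSet S x y).flipSet T x y = P.flipSet (S ∪ T) x y := by
  simp only [Profile.flipSet, Profile.mk.injEq, true_and]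
  funext k
  by_cases hT : k ∈ T
  · have hS : k ∉ S := fun hk => (Finset.disjoint_left.mp h hk) hT
    simp [hT, hS]
  · by_cases hS : k ∈ S <;> simp [hT, hS]

lemma flipSet_mem {D : Set (Profile V X)} (hrich : Rich D) (I : Finset V) :
    ∀ P ∈ D, ∀ x y : X,
      (∀ i ∈ I, i ∈ P.voters ∧ ImmAbove (P.ballot i) x y) → P.flipSet I x y ∈ D := by
  induction I using Finset.induction_on with
  | empty => intro P hP x y _; rwa [flipSet_empty]
  | @insert a s ha ih =>
    intro P hP x y hall
    have hmem : P.flipSet s x y ∈ D :=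
      ih P hP x y (fun i hi => hall i (Finset.mem_insert_of_mem hi))
    have heq : (P.flipSet s x y).flipAt a x y = P.flipSet (insert a s) x y := by
      rw [flipAt_eq, flipSet_flipSet P s {a} x y (Finset.disjoint_singleton_right.mpr ha),
        Finset.union_comm, ← Finset.insert_eq]
    have hballot : (P.flipSet s x y).ballot a = P.ballot a := by
      simp [flipSet_ballot, ha]
    rw [← heq]
    exact hrich _ hmem a (hall a (Finset.mem_insert_self a s)).1 x y
      (hballot ▸ (hall a (Finset.mem_insert_self a s)).2)

lemma key_stmt1 {D : Set (Profile V X)} {F : Profile V X → α} (hrich : Rich D)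
    (hPE : PrefEqual D F) :
    ∀ n : ℕ, ∀ P ∈ D, ∀ x y : X, ∀ I J : Finset V, Disjoint I J →
      I.card = n → J.card = n →
      (∀ i ∈ I ∪ J, i ∈ P.voters ∧ ImmAbove (P.ballot i) x y) →
      F (P.flipSet I x y) = F (P.flipSet J x y) := by
  intro n
  induction n with
  | zero =>
    intro P hP x y I J _ hI hJ _
    rw [Finset.card_eq_zero.mp hI, Finset.card_eq_zero.mp hJ]
  | succ n ih =>
    intro P hP x y I J hdisj hI hJ hall
    obtain ⟨a, ha⟩ := Finset.card_pos.mp (by rw [hI]; exact n.succ_pos)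
    obtain ⟨b, hb⟩ := Finset.card_pos.mp (by rw [hJ]; exact n.succ_pos)
    set I' : Finset V := I.erase a with hI'def
    set J' : Finset V := J.erase b with hJ'def
    have haI' : a ∉ I' := Finset.notMem_erase a I
    have hbJ' : b ∉ J' := Finset.notMem_erase b J
    have hbI : b ∉ I := fun h => (Finset.disjoint_left.mp hdisj h) hb
    have hbI' : b ∉ I' := fun h => hbI (Finset.mem_of_mem_erase h)
    have hab : a ≠ b := fun h => hbI (h ▸ ha)
    have hIins : insert a I' = I := Finset.insert_erase ha
    have hJins : insert b J' = J := Finset.insert_erase hb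
    have hI'card : I'.card = n := by
      rw [hI'def, Finset.card_erase_of_mem ha, hI]; omega
    have hJ'card : J'.card = n := by
      rw [hJ'def, Finset.card_erase_of_mem hb, hJ]; omega
    have hsubI' : ∀ i ∈ I', i ∈ I := fun i hi => Finset.mem_of_mem_erase hi
    have hsubJ' : ∀ i ∈ J', i ∈ J := fun i hi => Finset.mem_of_mem_erase hi
    -- Step 1: F (P.flipSet I) = F (P.flipSet (insert b I'))
    have hQ0 : P.flipSet I' x y ∈ D :=
      flipSet_mem hrich I' P hP x y
        (fun i hi => hall i (Finset.mem_union_left _ (hsubI' i hi)))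
    have hbal : ∀ k, k ∉ I' → (P.flipSet I' x y).ballot k = P.ballot k := by
      intro k hk; simp [flipSet_ballot, hk]
    have heqa : (P.flipSet I' x y).flipAt a x y = P.flipSet I x y := by
      rw [flipAt_eq, flipSet_flipSet P I' {a} x y (Finset.disjoint_singleton_right.mpr haI'),
        Finset.union_comm, ← Finset.insert_eq, hIins]
    have heqb : (P.flipSet I' x y).flipAt b x y = P.flipSet (insert b I') x y := by
      rw [flipAt_eq, flipSet_flipSet P I' {b} x y (Finset.disjoint_singleton_right.mpr hbI'),
        Finset.union_comm, ← Finset.insert_eq]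
    have hinsbI'sub : ∀ i ∈ insert b I', i ∈ I ∪ J := by
      intro i hi
      rcases Finset.mem_insert.mp hi with h | h
      · exact Finset.mem_union_right _ (h ▸ hb)
      · exact Finset.mem_union_left _ (hsubI' i h)
    have hmemI : (P.flipSet I' x y).flipAt a x y ∈ D := by
      rw [heqa]
      exact flipSet_mem hrich I P hP x y (fun i hi => hall i (Finset.mem_union_left _ hi))
    have hmemII : (P.flipSet I' x y).flipAt b x y ∈ D := by
      rw [heqb]
      exact flipSet_mem hrich (insert b I') P hP x y (fun i hi => hall i (hinsbI'sub i hi))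
    have step1 : F (P.flipSet I x y) = F (P.flipSet (insert b I') x y) := by
      rw [← heqa, ← heqb]
      exact hPE (P.flipSet I' x y) hQ0 x y a
        (hall a (Finset.mem_union_left _ ha)).1 b
        (hall b (Finset.mem_union_right _ hb)).1 hab
        ((hbal a haI') ▸ (hall a (Finset.mem_union_left _ ha)).2)
        ((hbal b hbI') ▸ (hall b (Finset.mem_union_right _ hb)).2)
        hmemI hmemII
    -- Step 2: use the induction hypothesis at P' = P.flipSet {b}
    have hP' : P.flipSet {b} x y ∈ D := by
      refine flipSet_mem hrich {b} P hP x y ?_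
      intro i hi
      rw [Finset.mem_singleton] at hi
      exact hi ▸ hall b (Finset.mem_union_right _ hb)
    have hbal' : ∀ k, k ∉ ({b} : Finset V) → (P.flipSet {b} x y).ballot k = P.ballot k := by
      intro k hk; simp [flipSet_ballot, Finset.mem_singleton.not.mp hk]
    have hdisj' : Disjoint I' J' :=
      hdisj.mono (Finset.erase_subset a I) (Finset.erase_subset b J)
    have hallstep : ∀ i ∈ I' ∪ J',
        i ∈ (P.flipSet {b} x y).voters ∧ ImmAbove ((P.flipSet {b} x y).ballot i) x y := by
      intro i hi
      have hib : i ≠ b := by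
        rcases Finset.mem_union.mp hi with h | h
        · exact fun he => hbI' (he ▸ h)
        · exact Finset.ne_of_mem_erase h
      have hiIJ : i ∈ I ∪ J := by
        rcases Finset.mem_union.mp hi with h | h
        · exact Finset.mem_union_left _ (hsubI' i h)
        · exact Finset.mem_union_right _ (hsubJ' i h)
      refine ⟨(hall i hiIJ).1, ?_⟩
      rw [hbal' i (by simpa using hib)]
      exact (hall i hiIJ).2
    have step2 := ih (P.flipSet {b} x y) hP' x y I' J' hdisj' hI'card hJ'card hallstep
    rw [flipSet_flipSet P {b} I' x y (Finset.disjoint_singleton_left.mpr hbI'),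
      flipSet_flipSet P {b} J' x y (Finset.disjoint_singleton_left.mpr hbJ'),
      ← Finset.insert_eq, ← Finset.insert_eq, hJins] at step2
    rw [step1, step2]

/-- on a rich domain, Preferential Equality is equivalent to its
coalitional version. -/
theorem stmt1 (D : Set (Profile V X)) (F : Profile V X → α) (hrich : Rich D) :
    PrefEqual D F ↔
      ∀ P ∈ D, ∀ x y : X, ∀ n : ℕ, 0 < n → ∀ I J : Finset V,
        Disjoint I J → I.card = n → J.card = n →
        (∀ i ∈ I ∪ J, i ∈ P.voters ∧ ImmAbove (P.ballot i) x y) →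
        F (P.flipSet I x y) = F (P.flipSet J x y) := by
  constructor
  · intro hPE P hP x y n _ I J hdisj hI hJ hall
    exact key_stmt1 hrich hPE n P hP x y I J hdisj hI hJ hall
  · intro h P hP x y i hi j hj hij hImmi hImmj _ _
    have := h P hP x y 1 one_pos {i} {j}
      (Finset.disjoint_singleton.mpr hij)
      (Finset.card_singleton i) (Finset.card_singleton j) ?_
    · rwa [← flipAt_eq, ← flipAt_eq] at this
    · intro k hk
      rcases Finset.mem_union.mp hk with hk | hk <;> rw [Finset.mem_singleton] at hk <;>
        subst hk
      · exact ⟨hi, hImmi⟩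
      · exact ⟨hj, hImmj⟩

end
end

section
/- The profile D_{v,m} constructed from a margin matrix m with all even entries, using an injective voter-labeling map v and McGarvey pairs, realizes the margin matrix m: M_{D_{v,m}} = m. -/
/- Formalization of voting with ranked ballots (strict preference ballots).
A profile assigns to each voter in a finite voter set a binary relation
(intended: a strict weak order) on the candidate set `X`. -/

open scoped Classical

noncomputable section

variable {V X α : Type*}

section McGarvey

variable [Fintype X] [LinearOrder X]

/-- Rank function for the McGarvey ranking `a b L` with `L` the alphabetic
order of the remaining candidates. -/
def rankT (a b u : X) : ℕ :=
  if u = a then 0 else if u = b then 1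
  else 2 + (Finset.univ.filter (fun w => w ≠ a ∧ w ≠ b ∧ w < u)).card

/-- The McGarvey ranking `G^⊤_{ab} = a b L`. -/
def GTop (a b : X) : X → X → Prop := fun u v => rankT a b u < rankT a b v

/-- Rank function for the McGarvey ranking `L⁻¹ a b`. -/
def rankB (a b u : X) : ℕ :=
  if u = a then Fintype.card X else if u = b then Fintype.card X + 1
  else (Finset.univ.filter (fun w => w ≠ a ∧ w ≠ b ∧ u < w)).card

/-- The McGarvey ranking `G^⊥_{ab} = L⁻¹ a b`. -/
def GBot (a b : X) : X → X → Prop := fun u v => rankB a b u < rankB a b v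

/-- The McGarvey ranking determined by a label `((a,b), ⋆, k)`. -/
def mcGarvey (t : (X × X) × Bool × ℕ) : X → X → Prop :=
  if t.2.1 then GTop t.1.1 t.1.2 else GBot t.1.1 t.1.2

/-- The labels of the voters of the Debord profile for margin matrix `m`:
pairs `(a,b)` with `⋆ ∈ {⊤,⊥}` and `1 ≤ k ≤ m(a,b)/2`. -/
def labels (m : X → X → ℤ) : Finset ((X × X) × Bool × ℕ) :=
  Finset.univ.biUnion (fun p : X × X =>
    (Finset.Icc 1 (m p.1 p.2 / 2).toNat).biUnion
      (fun k => {(p, true, k), (p, false, k)}))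

/-- The Debord profile `D_{v,m}` realizing the margin matrix `m`, with voters
labeled via the injective map `v`. -/
def Debord (v : (X × X) × Bool × ℕ → V) (m : X → X → ℤ) : Profile V X :=
  ⟨(labels m).image v,
    fun i => if h : ∃ t, v t = i then mcGarvey h.choose else fun _ _ => False⟩

end McGarvey

private lemma ltc [Fintype X] [LinearOrder X] (a b u w : X)
    (hu1 : u ≠ a) (hu2 : u ≠ b) :
    ((Finset.univ.filter (fun z => z ≠ a ∧ z ≠ b ∧ z < u)).card <
      (Finset.univ.filter (fun z => z ≠ a ∧ z ≠ b ∧ z < w)).card) ↔ u < w := by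
  constructor
  · intro h
    by_contra hc
    push_neg at hc
    have hsub : (Finset.univ.filter (fun z => z ≠ a ∧ z ≠ b ∧ z < w)) ⊆
        Finset.univ.filter (fun z => z ≠ a ∧ z ≠ b ∧ z < u) := by
      intro z hz
      simp only [Finset.mem_filter, Finset.mem_univ, true_and] at hz ⊢
      exact ⟨hz.1, hz.2.1, lt_of_lt_of_le hz.2.2 hc⟩
    exact absurd (Finset.card_le_card hsub) (by omega)
  · intro h
    apply Finset.card_lt_card
    rw [Finset.ssubset_iff_of_subset]
    · exact ⟨u, by simp [hu1, hu2, h], by simp⟩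
    · intro z hz
      simp only [Finset.mem_filter, Finset.mem_univ, true_and] at hz ⊢
      exact ⟨hz.1, hz.2.1, hz.2.2.trans h⟩

private lemma gtc [Fintype X] [LinearOrder X] (a b u w : X)
    (hu1 : u ≠ a) (hu2 : u ≠ b) :
    ((Finset.univ.filter (fun z => z ≠ a ∧ z ≠ b ∧ u < z)).card <
      (Finset.univ.filter (fun z => z ≠ a ∧ z ≠ b ∧ w < z)).card) ↔ w < u := by
  constructor
  · intro h
    by_contra hc
    push_neg at hc
    have hsub : (Finset.univ.filter (fun z => z ≠ a ∧ z ≠ b ∧ w < z)) ⊆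
        Finset.univ.filter (fun z => z ≠ a ∧ z ≠ b ∧ u < z) := by
      intro z hz
      simp only [Finset.mem_filter, Finset.mem_univ, true_and] at hz ⊢
      exact ⟨hz.1, hz.2.1, lt_of_le_of_lt hc hz.2.2⟩
    exact absurd (Finset.card_le_card hsub) (by omega)
  · intro h
    apply Finset.card_lt_card
    rw [Finset.ssubset_iff_of_subset]
    · exact ⟨u, by simp [hu1, hu2, h], by simp⟩
    · intro z hz
      simp only [Finset.mem_filter, Finset.mem_univ, true_and] at hz ⊢
      exact ⟨hz.1, hz.2.1, h.trans hz.2.2⟩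

private lemma boundB [Fintype X] [LinearOrder X] (a b u : X) :
    (Finset.univ.filter (fun z => z ≠ a ∧ z ≠ b ∧ u < z)).card < Fintype.card X := by
  rw [← Finset.card_univ]
  apply Finset.card_lt_card
  rw [Finset.ssubset_univ_iff]
  intro h
  have hm := Finset.mem_univ u
  rw [← h] at hm
  simp at hm

private lemma pairSum [Fintype X] [LinearOrder X] (x y : X) (hxy : x ≠ y) (a b : X) :
    ((if GTop a b x y then (1:ℤ) else 0) - (if GTop a b y x then 1 else 0)) +
      ((if GBot a b x y then (1:ℤ) else 0) - (if GBot a b y x then 1 else 0)) =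
      if (a, b) = (x, y) then 2 else if (a, b) = (y, x) then -2 else 0 := by
  have hyx := hxy.symm
  simp only [GTop, GBot, rankT, rankB, Prod.mk.injEq]
  rcases eq_or_ne x a with rfl | hxa
  · rcases eq_or_ne y b with rfl | hyb
    · simp [hxy, hyx]
    · have hbd := boundB x b y
      simp only [if_pos rfl, if_neg hyx, if_neg hyb, hxy, Ne.symm hyb, and_false,
        false_and, if_false, and_true]
      split_ifs <;> omega
  · rcases eq_or_ne x b with rfl | hxb
    · rcases eq_or_ne y a with rfl | hya
      · simp [hxa, hxy, hyx]
      · have hbd := boundB a x y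
        simp only [if_neg hxa, if_pos rfl, if_neg hya, if_neg hyx, hxy, Ne.symm hya,
          and_false, false_and, if_false, and_true]
        split_ifs <;> omega
    · rcases eq_or_ne y a with rfl | hya
      · have hbd := boundB y b x
        simp only [if_neg hxa, if_neg hxb, if_pos rfl, hyx, Ne.symm hxb, and_false,
          false_and, if_false, and_true, true_and]
        split_ifs <;> omega
      · rcases eq_or_ne y b with rfl | hyb
        · have hbd := boundB a y x
          simp only [if_neg hxa, if_neg hxb, if_neg hya, if_pos rfl, Ne.symm hxa, hyx,
            and_false, false_and, if_false, and_true, true_and]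
          split_ifs <;> omega
        · have h1 := ltc a b x y hxa hxb
          have h2 := ltc a b y x hya hyb
          have h3 := gtc a b x y hxa hxb
          have h4 := gtc a b y x hya hyb
          simp only [if_neg hxa, if_neg hxb, if_neg hya, if_neg hyb, Ne.symm hxa,
            Ne.symm hya, false_and, if_false]
          rcases hxy.lt_or_gt with h | h
          · have a1 := h1.2 h
            have a2 := h4.2 h
            have a3 : ¬ x < x := lt_irrefl x
            split_ifs <;> omega
          · have a1 := h2.2 h
            have a2 := h3.2 h
            split_ifs <;> omega

/-- the Debord profile `D_{v,m}` realizes the margin matrix `m`. -/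
theorem stmt3 [Fintype X] [LinearOrder X]
    (v : (X × X) × Bool × ℕ → V) (hv : Function.Injective v)
    (m : X → X → ℤ) (hskew : ∀ x y, m x y = - m y x)
    (heven : ∀ x y, Even (m x y)) :
    ∀ x y : X, (Debord v m).margin x y = m x y := by
  have hb : ∀ t : (X × X) × Bool × ℕ,
      (if h : ∃ t', v t' = v t then mcGarvey h.choose else fun _ _ => False) = mcGarvey t := by
    intro t
    have h : ∃ t', v t' = v t := ⟨t, rfl⟩
    rw [dif_pos h, hv h.choose_spec]
  have hcount : ∀ x y : X, ((Debord v m).count x y : ℤ) =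
      ∑ t ∈ labels m, (if mcGarvey t x y then (1:ℤ) else 0) := by
    intro x y
    have h1 : (Debord v m).count x y =
        ((labels m).filter (fun t => mcGarvey t x y)).card := by
      rw [Profile.count, show (Debord v m).voters = (labels m).image v from rfl,
        Finset.filter_image, Finset.card_image_of_injective _ hv]
      congr 1
      apply Finset.filter_congr
      intro t _
      show (if h : ∃ t', v t' = v t then mcGarvey h.choose else fun _ _ => False) x y ↔ _
      rw [hb t]
    rw [h1, Finset.sum_boole]
  intro x y
  rcases eq_or_ne x y with rfl | hxy
  · have h0 : m x x = 0 := by have := hskew x x; omega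
    simp [Profile.margin, h0]
  · have houter : (↑(Finset.univ : Finset (X × X)) : Set (X × X)).PairwiseDisjoint
        (fun p : X × X => (Finset.Icc 1 (m p.1 p.2 / 2).toNat).biUnion
          (fun k => ({(p, true, k), (p, false, k)} : Finset ((X × X) × Bool × ℕ)))) := by
      intro p _ q _ hpq
      simp only [Function.onFun]
      rw [Finset.disjoint_left]
      intro t ht ht'
      simp only [Finset.mem_biUnion, Finset.mem_insert, Finset.mem_singleton] at ht ht'
      obtain ⟨k, -, rfl | rfl⟩ := ht <;> obtain ⟨k', -, h | h⟩ := ht' <;>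
        exact hpq (congrArg Prod.fst h)
    have hinner : ∀ p : X × X,
        (↑(Finset.Icc 1 (m p.1 p.2 / 2).toNat) : Set ℕ).PairwiseDisjoint
          (fun k => ({(p, true, k), (p, false, k)} : Finset ((X × X) × Bool × ℕ))) := by
      intro p k _ k' _ hkk
      simp only [Function.onFun]
      rw [Finset.disjoint_left]
      intro t ht ht'
      simp only [Finset.mem_insert, Finset.mem_singleton] at ht ht'
      obtain rfl | rfl := ht <;> obtain h | h := ht' <;>
        exact hkk (congrArg (fun z : (X × X) × Bool × ℕ => z.2.2) h)
    have hmar : (Debord v m).margin x y =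
        ∑ t ∈ labels m, ((if mcGarvey t x y then (1:ℤ) else 0) -
          (if mcGarvey t y x then 1 else 0)) := by
      simp only [Profile.margin]
      rw [hcount x y, hcount y x, ← Finset.sum_sub_distrib]
    rw [hmar]
    unfold labels
    rw [Finset.sum_biUnion houter]
    have hper : ∀ p : X × X,
        (∑ t ∈ (Finset.Icc 1 (m p.1 p.2 / 2).toNat).biUnion
          (fun k => ({(p, true, k), (p, false, k)} : Finset ((X × X) × Bool × ℕ))),
          ((if mcGarvey t x y then (1:ℤ) else 0) - (if mcGarvey t y x then 1 else 0)))
        = ((m p.1 p.2 / 2).toNat : ℤ) *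
            (if p = (x, y) then 2 else if p = (y, x) then -2 else 0) := by
      rintro ⟨a, b⟩
      rw [Finset.sum_biUnion (hinner (a, b))]
      have hk : ∀ k : ℕ,
          (∑ t ∈ ({((a, b), true, k), ((a, b), false, k)} :
              Finset ((X × X) × Bool × ℕ)),
            ((if mcGarvey t x y then (1:ℤ) else 0) - (if mcGarvey t y x then 1 else 0)))
          = (if ((a, b) : X × X) = (x, y) then 2 else if (a, b) = (y, x) then -2 else 0) := by
        intro k
        rw [Finset.sum_pair (by simp : (((a, b), true, k) : (X × X) × Bool × ℕ) ≠
          ((a, b), false, k))]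
        have hps := pairSum x y hxy a b
        simp only [mcGarvey, if_true, if_false, Bool.false_eq_true]
        convert hps using 2
      rw [Finset.sum_congr rfl (fun k _ => hk k), Finset.sum_const, Nat.card_Icc]
      simp [nsmul_eq_mul]
    rw [Finset.sum_congr rfl (fun p _ => hper p)]
    have hne : ((x, y) : X × X) ≠ (y, x) := by
      simp only [ne_eq, Prod.mk.injEq, not_and]
      exact fun h _ => hxy h
    have hsplit : ∀ p : X × X, ((m p.1 p.2 / 2).toNat : ℤ) *
        (if p = (x, y) then 2 else if p = (y, x) then -2 else 0)
        = (if p = (x, y) then ((m p.1 p.2 / 2).toNat : ℤ) * 2 else 0)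
          + (if p = (y, x) then ((m p.1 p.2 / 2).toNat : ℤ) * (-2) else 0) := by
      intro p
      by_cases h1 : p = (x, y)
      · subst h1; simp [hne]
      · by_cases h2 : p = (y, x)
        · subst h2; simp [hne.symm]
        · simp [h1, h2]
    rw [Finset.sum_congr rfl (fun p _ => hsplit p), Finset.sum_add_distrib,
      Finset.sum_ite_eq' Finset.univ ((x, y) : X × X),
      Finset.sum_ite_eq' Finset.univ ((y, x) : X × X)]
    simp only [Finset.mem_univ, if_true]
    obtain ⟨j, hj⟩ := heven x y
    have h2 := hskew y x
    omega


end
end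

section
/- Let X be a finite candidate set and v an injective labeling map as in the Debord construction. If a linear profile P satisfies: (1) every voter is in the range of v and votes the McGarvey ranking determined by its preimage; (2) v(ab,T,k) is a voter iff v(ab,B,k) is; (3) if v(ab,*,k) is a voter then so is v(ab,*,k') for all 1 <= k' <= k; (4) if some designated ab-voter is present then no designated ba-voter is present; then P equals D_{v, M_P}, the Debord profile realizing the margin matrix of P. -/
/- Formalization of voting with ranked ballots (strict preference ballots).
A profile assigns to each voter in a finite voter set a binary relation
(intended: a strict weak order) on the candidate set `X`. -/

open scoped Classical

noncomputable section

variable {V X α : Type*}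

section Helpers
variable [Fintype X] [LinearOrder X]

lemma downward_eq_Icc (S : Finset ℕ) (hS1 : ∀ k ∈ S, 1 ≤ k)
    (hS2 : ∀ k ∈ S, ∀ k', 1 ≤ k' → k' ≤ k → k' ∈ S) :
    S = Finset.Icc 1 S.card := by
  ext j
  simp only [Finset.mem_Icc]
  constructor
  · intro hj
    refine ⟨hS1 j hj, ?_⟩
    have hsub : Finset.Icc 1 j ⊆ S := fun k hk => by
      rw [Finset.mem_Icc] at hk; exact hS2 j hj k hk.1 hk.2
    have := Finset.card_le_card hsub
    simpa using this
  · rintro ⟨hj1, hjc⟩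
    by_contra hjS
    have hsub : S ⊆ Finset.Icc 1 (j - 1) := fun k hk => by
      rw [Finset.mem_Icc]
      have h1k := hS1 k hk
      have : k < j := by
        by_contra h'; push_neg at h'
        exact hjS (hS2 k hk j hj1 h')
      omega
    have := Finset.card_le_card hsub
    simp [Nat.card_Icc] at this
    omega

lemma rankT_lo {a b : X} (hab : a ≠ b) : rankT a b a = 0 ∧ rankT a b b = 1 := by
  constructor <;> simp [rankT, hab.symm]

lemma rankT_of_ne {a b u : X} (hu : u ≠ a) (hu' : u ≠ b) :
    rankT a b u = 2 + (Finset.univ.filter (fun w => w ≠ a ∧ w ≠ b ∧ w < u)).card := by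
  simp [rankT, hu, hu']

lemma rankT_hi {a b u : X} (hu : u ≠ a) (hu' : u ≠ b) : 2 ≤ rankT a b u := by
  rw [rankT_of_ne hu hu']; omega

lemma rankB_hi {a b : X} (hab : a ≠ b) :
    rankB a b a = Fintype.card X ∧ rankB a b b = Fintype.card X + 1 := by
  constructor <;> simp [rankB, hab.symm]

lemma rankB_of_ne {a b u : X} (hu : u ≠ a) (hu' : u ≠ b) :
    rankB a b u = (Finset.univ.filter (fun w => w ≠ a ∧ w ≠ b ∧ u < w)).card := by
  simp [rankB, hu, hu']

lemma rankB_lo {a b u : X} (hu : u ≠ a) (hu' : u ≠ b) :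
    rankB a b u < Fintype.card X := by
  rw [rankB_of_ne hu hu']
  have hsub : (Finset.univ.filter (fun w => w ≠ a ∧ w ≠ b ∧ u < w)) ⊆
      Finset.univ.erase a := by
    intro w hw
    simp only [Finset.mem_filter] at hw
    exact Finset.mem_erase.2 ⟨hw.2.1, Finset.mem_univ _⟩
  have := Finset.card_le_card hsub
  have hcard : (Finset.univ.erase a).card = Fintype.card X - 1 := by
    simp [Finset.card_erase_of_mem]
  have hpos : 0 < Fintype.card X := Fintype.card_pos_iff.2 ⟨a⟩
  omega

lemma gtop_self {a b : X} (hab : a ≠ b) : GTop a b a b := by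
  have := rankT_lo hab
  simp [GTop, this.1, this.2]

lemma gbot_self {a b : X} (hab : a ≠ b) : GBot a b a b := by
  have := rankB_hi hab
  simp [GBot, this.1, this.2]

lemma not_gtop_rev {a b : X} (hab : a ≠ b) : ¬ GTop a b b a := by
  have := rankT_lo hab
  simp [GTop, this.1, this.2]

lemma not_gbot_rev {a b : X} (hab : a ≠ b) : ¬ GBot a b b a := by
  have := rankB_hi hab
  simp [GBot, this.1, this.2]

lemma filter_lt_mono {c d a b : X} (ha : a ≠ c) (ha' : a ≠ d) (hab : a < b) :
    (Finset.univ.filter (fun w => w ≠ c ∧ w ≠ d ∧ w < a)).card <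
    (Finset.univ.filter (fun w => w ≠ c ∧ w ≠ d ∧ w < b)).card := by
  apply Finset.card_lt_card
  constructor
  · intro w hw
    simp only [Finset.mem_filter] at hw ⊢
    exact ⟨hw.1, hw.2.1, hw.2.2.1, lt_trans hw.2.2.2 hab⟩
  · intro hsub
    have := hsub (by simp [ha, ha', hab] : a ∈ _)
    simp at this

lemma filter_gt_mono {c d a b : X} (hb : b ≠ c) (hb' : b ≠ d) (hab : a < b) :
    (Finset.univ.filter (fun w => w ≠ c ∧ w ≠ d ∧ b < w)).card <
    (Finset.univ.filter (fun w => w ≠ c ∧ w ≠ d ∧ a < w)).card := by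
  apply Finset.card_lt_card
  constructor
  · intro w hw
    simp only [Finset.mem_filter] at hw ⊢
    exact ⟨hw.1, hw.2.1, hw.2.2.1, lt_trans hab hw.2.2.2⟩
  · intro hsub
    have := hsub (by simp [hb, hb', hab] : b ∈ _)
    simp at this

/-- Key flip lemma: for labels `(c,d)` distinct from `(a,b)` and `(b,a)`,
`G⊤_{cd}` ranks `a` above `b` iff `G⊥_{cd}` ranks `b` above `a`. -/
lemma gtop_iff_gbot {a b c d : X} (hab : a ≠ b) (hcd : c ≠ d)
    (hne1 : (c, d) ≠ (a, b)) (hne2 : (c, d) ≠ (b, a)) :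
    (GTop c d a b ↔ GBot c d b a) := by
  have hT := rankT_lo hcd
  have hB := rankB_hi hcd
  show rankT c d a < rankT c d b ↔ rankB c d b < rankB c d a
  simp only [ne_eq, Prod.mk.injEq, not_and] at hne1 hne2
  rcases eq_or_ne a c with rfl | hac
  · have hbd : b ≠ d := fun h => hne1 rfl h.symm
    have hba : b ≠ a := hab.symm
    have h2 := rankT_hi hba hbd
    have h3 := rankB_lo hba hbd
    rw [hT.1, hB.1]
    constructor <;> intro <;> omega
  · rcases eq_or_ne a d with rfl | had
    · have hbc : b ≠ c := fun h => hne2 h.symm rfl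
      have hba : b ≠ a := hab.symm
      have h2 := rankT_hi hbc hba
      have h3 := rankB_lo hbc hba
      rw [hT.2, hB.2]
      constructor <;> intro <;> omega
    · rcases eq_or_ne b c with rfl | hbc
      · have h2 := rankT_hi hac had
        have h3 := rankB_lo hac had
        rw [hT.1, hB.1]
        constructor <;> intro <;> omega
      · rcases eq_or_ne b d with rfl | hbd
        · have h2 := rankT_hi hac had
          have h3 := rankB_lo hac had
          rw [hT.2, hB.2]
          constructor <;> intro <;> omega
        · rw [rankT_of_ne hac had, rankT_of_ne hbc hbd,
            rankB_of_ne hac had, rankB_of_ne hbc hbd]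
          rcases lt_trichotomy a b with h | h | h
          · have g1 := filter_lt_mono (c := c) (d := d) hac had h
            have g2 := filter_gt_mono (c := c) (d := d) hbc hbd h
            constructor <;> intro <;> omega
          · exact absurd h hab
          · have g1 := filter_lt_mono (c := c) (d := d) hbc hbd h
            have g2 := filter_gt_mono (c := c) (d := d) hac had h
            constructor <;> intro <;> omega

end Helpers

set_option maxHeartbeats 1000000 in
/-- a profile satisfying the four conditions of the key lemma
equals the Debord profile for its own margin matrix. -/
theorem stmt4 [Fintype X] [LinearOrder X]
    (v : (X × X) × Bool × ℕ → V) (hv : Function.Injective v)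
    (P : Profile V X)
    (h1 : ∀ i ∈ P.voters, ∃ t : (X × X) × Bool × ℕ,
      v t = i ∧ t.1.1 ≠ t.1.2 ∧ 1 ≤ t.2.2 ∧ P.ballot i = mcGarvey t)
    (h2 : ∀ (a b : X) (k : ℕ), a ≠ b → 1 ≤ k →
      (v ((a, b), true, k) ∈ P.voters ↔ v ((a, b), false, k) ∈ P.voters))
    (h3 : ∀ (a b : X) (s : Bool) (k k' : ℕ), a ≠ b → 1 ≤ k' → k' ≤ k →
      v ((a, b), s, k) ∈ P.voters → v ((a, b), s, k') ∈ P.voters)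
    (h4 : ∀ (a b : X) (s s' : Bool) (k k' : ℕ), a ≠ b → 1 ≤ k → 1 ≤ k' →
      v ((a, b), s, k) ∈ P.voters → v ((b, a), s', k') ∉ P.voters) :
    P.voters = (Debord v (fun a b => P.margin a b)).voters ∧
    ∀ i ∈ P.voters,
      P.ballot i = (Debord v (fun a b => P.margin a b)).ballot i := by
  classical
  set Λ : Finset ((X × X) × Bool × ℕ) := P.voters.preimage v (hv.injOn) with hΛ
  have memΛ : ∀ t, t ∈ Λ ↔ v t ∈ P.voters := fun t => Finset.mem_preimage
  have hlab : ∀ t ∈ Λ, t.1.1 ≠ t.1.2 ∧ 1 ≤ t.2.2 ∧ P.ballot (v t) = mcGarvey t := by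
    intro t ht
    obtain ⟨t', hvt', hne, hk, hb⟩ := h1 (v t) ((memΛ t).1 ht)
    obtain rfl : t' = t := hv hvt'
    exact ⟨hne, hk, hb⟩
  have himg : Λ.image v = P.voters := by
    ext i
    simp only [Finset.mem_image]
    constructor
    · rintro ⟨t, ht, rfl⟩; exact (memΛ t).1 ht
    · intro hi
      obtain ⟨t, hvt, -, -, -⟩ := h1 i hi
      exact ⟨t, (memΛ t).2 (hvt ▸ hi), hvt⟩
  have hflipΛ : ∀ t ∈ Λ, ((t.1, !t.2.1, t.2.2) : (X × X) × Bool × ℕ) ∈ Λ := by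
    intro t ht
    obtain ⟨hne, hk, -⟩ := hlab t ht
    obtain ⟨⟨a, b⟩, s, k⟩ := t
    have hh := h2 a b k hne hk
    rw [memΛ] at ht ⊢
    cases s
    · exact hh.2 ht
    · exact hh.1 ht
  set n : X → X → ℕ := fun a b =>
    (Λ.filter (fun t => t.1 = (a, b) ∧ t.2.1 = true)).card with hn
  have hneS : ∀ a b k, v ((a, b), true, k) ∈ P.voters → a ≠ b ∧ 1 ≤ k := by
    intro a b k h
    have := hlab ((a, b), true, k) ((memΛ _).2 h)
    exact ⟨this.1, this.2.1⟩
  have hIcc : ∀ (a b : X) (k : ℕ),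
      (v ((a, b), true, k) ∈ P.voters ↔ 1 ≤ k ∧ k ≤ n a b) := by
    intro a b k
    set S : Finset ℕ := (Λ.filter (fun t => t.1 = (a, b) ∧ t.2.1 = true)).image
      (fun t => t.2.2) with hS
    have hmemS : ∀ k', k' ∈ S ↔ v ((a, b), true, k') ∈ P.voters := by
      intro k'
      rw [hS]
      simp only [Finset.mem_image, Finset.mem_filter]
      constructor
      · rintro ⟨⟨⟨c, d⟩, s, j⟩, ⟨htΛ, ht1, hts⟩, htk⟩
        simp only [Prod.mk.injEq] at ht1
        obtain ⟨rfl, rfl⟩ := ht1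
        simp only at hts htk
        subst hts; subst htk
        exact (memΛ _).1 htΛ
      · intro h
        exact ⟨((a, b), true, k'), ⟨(memΛ _).2 h, rfl, rfl⟩, rfl⟩
    have hcard : S.card = n a b := by
      rw [hS]
      apply Finset.card_image_of_injOn
      intro t1 ht1 t2 ht2 he
      simp only [Finset.coe_filter, Set.mem_setOf_eq] at ht1 ht2
      obtain ⟨⟨c1, d1⟩, s1, j1⟩ := t1
      obtain ⟨⟨c2, d2⟩, s2, j2⟩ := t2
      simp only [Prod.mk.injEq] at ht1 ht2 ⊢
      simp only at he
      obtain ⟨-, ⟨rfl, rfl⟩, rfl⟩ := ht1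
      obtain ⟨-, ⟨rfl, rfl⟩, rfl⟩ := ht2
      exact ⟨⟨rfl, rfl⟩, rfl, he⟩
    have hdown := downward_eq_Icc S
      (fun k' hk' => (hneS a b k' ((hmemS k').1 hk')).2)
      (fun k' hk' k'' h1' h2' => (hmemS k'').2
        (h3 a b true k' k'' (hneS a b k' ((hmemS k').1 hk')).1 h1' h2'
          ((hmemS k').1 hk')))
    rw [← hmemS k, hdown, hcard, Finset.mem_Icc]
  have hIccB : ∀ (a b : X) (s : Bool) (k : ℕ),
      (v ((a, b), s, k) ∈ P.voters ↔ 1 ≤ k ∧ k ≤ n a b) := by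
    intro a b s k
    cases s
    · rw [← hIcc]
      constructor
      · intro h
        have hl := hlab ((a, b), false, k) ((memΛ _).2 h)
        exact (h2 a b k hl.1 hl.2.1).2 h
      · intro h
        obtain ⟨hne, hk⟩ := hneS a b k h
        exact (h2 a b k hne hk).1 h
    · exact hIcc a b k
  have hexcl : ∀ a b : X, 1 ≤ n a b → n b a = 0 := by
    intro a b hpos
    have h1' : v ((a, b), true, 1) ∈ P.voters := (hIcc a b 1).2 ⟨le_refl 1, hpos⟩
    obtain ⟨hne, -⟩ := hneS a b 1 h1'
    by_contra h0
    have h2' : v ((b, a), true, 1) ∈ P.voters := (hIcc b a 1).2 ⟨le_refl 1, by omega⟩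
    exact h4 a b true true 1 1 hne le_rfl le_rfl h1' h2'
  have hdiag : ∀ a : X, n a a = 0 := by
    intro a
    by_contra h0
    have h' : v ((a, a), true, 1) ∈ P.voters := (hIcc a a 1).2 ⟨le_rfl, by omega⟩
    exact (hneS a a 1 h').1 rfl
  -- McGarvey facts on special labels
  have hmcg_self : ∀ (a b : X) (s : Bool) (k : ℕ), a ≠ b → mcGarvey ((a, b), s, k) a b := by
    intro a b s k hab
    cases s
    · simpa [mcGarvey] using gbot_self hab
    · simpa [mcGarvey] using gtop_self hab
  have hmcg_rev : ∀ (a b : X) (s : Bool) (k : ℕ), a ≠ b → ¬ mcGarvey ((b, a), s, k) a b := by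
    intro a b s k hab
    cases s
    · simpa [mcGarvey] using not_gbot_rev hab.symm
    · simpa [mcGarvey] using not_gtop_rev hab.symm
  -- counts
  have hcount : ∀ a b : X, P.count a b = (Λ.filter (fun t => mcGarvey t a b)).card := by
    intro a b
    rw [Profile.count, ← himg, Finset.filter_image,
      Finset.card_image_of_injOn (hv.injOn)]
    congr 1
    apply Finset.filter_congr
    intro t ht
    rw [(hlab t ht).2.2]
  -- split the count
  have e2 : ∀ a b : X, (Λ.filter (fun t => t.1 = (a, b))).card = 2 * n a b := by
    intro a b
    have hsplit2 := Finset.card_filter_add_card_filter_not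
      (s := Λ.filter (fun t => t.1 = (a, b))) (p := fun t => t.2.1 = true)
    have eT : ((Λ.filter (fun t => t.1 = (a, b))).filter (fun t => t.2.1 = true)).card
        = n a b := by
      rw [Finset.filter_filter, hn]
    have eF : ((Λ.filter (fun t => t.1 = (a, b))).filter (fun t => ¬ t.2.1 = true)).card
        = n a b := by
      rw [hn]
      apply Finset.card_nbij' (i := fun t => ((t.1, !t.2.1, t.2.2) : (X × X) × Bool × ℕ))
        (j := fun t => ((t.1, !t.2.1, t.2.2) : (X × X) × Bool × ℕ))
      · intro t ht
        simp only [Finset.mem_coe, Finset.mem_filter] at ht ⊢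
        obtain ⟨⟨htΛ, ht1⟩, hts⟩ := ht
        refine ⟨hflipΛ t htΛ, ht1, ?_⟩
        simp only [Bool.not_eq_true] at hts
        simp [hts]
      · intro t ht
        simp only [Finset.mem_coe, Finset.mem_filter] at ht ⊢
        obtain ⟨htΛ, ht1, hts⟩ := ht
        refine ⟨⟨hflipΛ t htΛ, ht1⟩, ?_⟩
        simp [hts]
      · intro t _
        simp [Bool.not_not]
      · intro t _
        simp [Bool.not_not]
    omega
  have hsplit : ∀ a b : X, a ≠ b → (Λ.filter (fun t => mcGarvey t a b)).card =
      2 * n a b +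
        (Λ.filter (fun t => (t.1 ≠ (a, b) ∧ t.1 ≠ (b, a)) ∧ mcGarvey t a b)).card := by
    intro a b hab
    have e1 : Λ.filter (fun t => mcGarvey t a b) =
        Λ.filter (fun t => t.1 = (a, b)) ∪
        Λ.filter (fun t => (t.1 ≠ (a, b) ∧ t.1 ≠ (b, a)) ∧ mcGarvey t a b) := by
      ext t
      simp only [Finset.mem_union, Finset.mem_filter]
      constructor
      · rintro ⟨ht, hm⟩
        by_cases hq : t.1 = (a, b)
        · exact Or.inl ⟨ht, hq⟩
        · refine Or.inr ⟨ht, ⟨hq, ?_⟩, hm⟩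
          intro hr
          obtain ⟨⟨c, d⟩, s, k⟩ := t
          simp only [Prod.mk.injEq] at hr
          obtain ⟨rfl, rfl⟩ := hr
          exact hmcg_rev d c s k hab hm
      · rintro (⟨ht, hq⟩ | ⟨ht, -, hm⟩)
        · refine ⟨ht, ?_⟩
          obtain ⟨⟨c, d⟩, s, k⟩ := t
          simp only [Prod.mk.injEq] at hq
          obtain ⟨rfl, rfl⟩ := hq
          exact hmcg_self c d s k hab
        · exact ⟨ht, hm⟩
    have hdisj : Disjoint (Λ.filter (fun t => t.1 = (a, b)))
        (Λ.filter (fun t => (t.1 ≠ (a, b) ∧ t.1 ≠ (b, a)) ∧ mcGarvey t a b)) := by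
      rw [Finset.disjoint_left]
      intro t ht1 ht2
      simp only [Finset.mem_filter] at ht1 ht2
      exact ht2.2.1.1 ht1.2
    rw [e1, Finset.card_union_of_disjoint hdisj, e2 a b]
  -- flipping the remainder
  have hmcflip : ∀ (a b : X), a ≠ b → ∀ t ∈ Λ, t.1 ≠ (a, b) → t.1 ≠ (b, a) →
      (mcGarvey t a b ↔ mcGarvey (t.1, !t.2.1, t.2.2) b a) := by
    intro a b hab t ht hne1 hne2
    have hcd := (hlab t ht).1
    obtain ⟨⟨c, d⟩, s, k⟩ := t
    simp only at hcd hne1 hne2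
    cases s
    · simpa [mcGarvey] using (gtop_iff_gbot hab.symm hcd hne2 hne1).symm
    · simpa [mcGarvey] using gtop_iff_gbot hab hcd hne1 hne2
  have hRflip : ∀ a b : X, a ≠ b →
      (Λ.filter (fun t => (t.1 ≠ (a, b) ∧ t.1 ≠ (b, a)) ∧ mcGarvey t a b)).card =
      (Λ.filter (fun t => (t.1 ≠ (b, a) ∧ t.1 ≠ (a, b)) ∧ mcGarvey t b a)).card := by
    intro a b hab
    apply Finset.card_nbij' (i := fun t => ((t.1, !t.2.1, t.2.2) : (X × X) × Bool × ℕ))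
      (j := fun t => ((t.1, !t.2.1, t.2.2) : (X × X) × Bool × ℕ))
    · intro t ht
      simp only [Finset.mem_coe, Finset.mem_filter] at ht ⊢
      obtain ⟨htΛ, ⟨hne1, hne2⟩, hm⟩ := ht
      exact ⟨hflipΛ t htΛ, ⟨hne2, hne1⟩, (hmcflip a b hab t htΛ hne1 hne2).1 hm⟩
    · intro t ht
      simp only [Finset.mem_coe, Finset.mem_filter] at ht ⊢
      obtain ⟨htΛ, ⟨hne1, hne2⟩, hm⟩ := ht
      exact ⟨hflipΛ t htΛ, ⟨hne2, hne1⟩, (hmcflip b a hab.symm t htΛ hne1 hne2).1 hm⟩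
    · intro t _
      simp [Bool.not_not]
    · intro t _
      simp [Bool.not_not]
  have hmarg : ∀ a b : X, a ≠ b →
      P.margin a b = 2 * (n a b : ℤ) - 2 * (n b a : ℤ) := by
    intro a b hab
    rw [Profile.margin, hcount a b, hcount b a, hsplit a b hab, hsplit b a hab.symm,
      hRflip a b hab]
    push_cast
    ring
  have hval : ∀ a b : X, ((P.margin a b) / 2).toNat = n a b := by
    intro a b
    rcases eq_or_ne a b with rfl | hab
    · have hz : P.margin a a = 0 := by simp [Profile.margin]
      simp [hz, hdiag a]
    · rw [hmarg a b hab]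
      have hx := hexcl a b
      have hy := hexcl b a
      omega
  -- labels of the margin matrix
  have hlabels : ∀ t : (X × X) × Bool × ℕ,
      t ∈ labels (fun a b => P.margin a b) ↔
        1 ≤ t.2.2 ∧ t.2.2 ≤ n t.1.1 t.1.2 := by
    intro t
    obtain ⟨⟨c, d⟩, s, k⟩ := t
    simp only [labels, Finset.mem_biUnion, Finset.mem_univ, true_and, Finset.mem_Icc,
      Finset.mem_insert, Finset.mem_singleton, Prod.mk.injEq]
    constructor
    · rintro ⟨p, k', hk', (⟨hp, -, hk⟩ | ⟨hp, -, hk⟩)⟩ <;>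
        · subst hp; subst hk
          simpa [hval c d] using hk'
    · rintro ⟨hk1, hk2⟩
      refine ⟨(c, d), k, ?_, ?_⟩
      · simpa [hval c d] using And.intro hk1 hk2
      · cases s
        · exact Or.inr ⟨rfl, rfl, rfl⟩
        · exact Or.inl ⟨rfl, rfl, rfl⟩
  have hΛeq : Λ = labels (fun a b => P.margin a b) := by
    ext t
    rw [hlabels t]
    obtain ⟨⟨c, d⟩, s, k⟩ := t
    rw [memΛ]
    exact hIccB c d s k
  constructor
  · show P.voters = (labels (fun a b => P.margin a b)).image v
    rw [← hΛeq, himg]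
  · intro i hi
    obtain ⟨t, rfl, -, -, hb⟩ := h1 i hi
    rw [hb]
    show mcGarvey t =
      if h : ∃ t', v t' = v t then mcGarvey h.choose else fun _ _ => False
    rw [dif_pos ⟨t, rfl⟩]
    exact congrArg mcGarvey (hv (Exists.choose_spec (⟨t, rfl⟩ : ∃ t', v t' = v t))).symm

end
end

section
/- If a voting rule on the domain of all profiles (of strict weak orders) satisfies Tiebreaking Compensation, then it satisfies Preferential Compensation and hence Preferential Equality. -/
/- Formalization of voting with ranked ballots (strict preference ballots).
A profile assigns to each voter in a finite voter set a binary relation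
(intended: a strict weak order) on the candidate set `X`. -/

open scoped Classical

noncomputable section

variable {V X α : Type*}

section Aux

variable {V X α : Type*}

lemma Profile.ext' {P Q : Profile V X} (h1 : P.voters = Q.voters)
    (h2 : P.ballot = Q.ballot) : P = Q := by
  cases P; cases Q; cases h1; cases h2; rfl

lemma swo_trans {R : X → X → Prop} (hR : IsSWO R) {a b c : X}
    (h1 : R a b) (h2 : R b c) : R a c := by
  by_contra h3
  exact hR.2 a c b h3 (hR.1 b c h2) h1

lemma flipPair_iff {R : X → X → Prop} {x y a b : X} (h1 : ¬(a = x ∧ b = y))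
    (h2 : ¬(a = y ∧ b = x)) : flipPair R x y a b ↔ R a b := by
  simp [flipPair, h1, h2]

lemma flipPair_not_xy {R : X → X → Prop} {x y : X} : ¬ flipPair R x y x y := by
  simp [flipPair]

lemma flipPair_yx {R : X → X → Prop} {x y : X} (hne : x ≠ y) : flipPair R x y y x := by
  simp [flipPair, hne, Ne.symm hne]

lemma flipPair_flip_flip {R : X → X → Prop} {x y : X} (hxy : R x y) (hyx : ¬ R y x) :
    flipPair (flipPair R x y) y x = R := by
  have hne : x ≠ y := by rintro rfl; exact hyx hxy
  funext a b
  apply propext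
  by_cases h1 : a = x ∧ b = y
  · obtain ⟨rfl, rfl⟩ := h1
    simp [flipPair, hne, Ne.symm hne, hxy]
  · by_cases h2 : a = y ∧ b = x
    · obtain ⟨rfl, rfl⟩ := h2
      simp [flipPair, hne, Ne.symm hne, hyx]
    · simp [flipPair, h1, h2]

lemma immAbove_flip {R : X → X → Prop} {x y : X} (hR : IsSWO R)
    (him : ImmAbove R x y) : ImmAbove (flipPair R x y) y x := by
  have hxy := him.1
  have hne : x ≠ y := by rintro rfl; exact hR.1 _ _ hxy hxy
  refine ⟨flipPair_yx hne, ?_⟩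
  rintro z ⟨h1, h2⟩
  by_cases hzx : z = x
  · rw [hzx] at h2
    rw [flipPair_iff (fun h => hne h.2) (fun h => hne h.1)] at h2
    exact hR.1 _ _ h2 h2
  by_cases hzy : z = y
  · rw [hzy] at h1
    rw [flipPair_iff (fun h => hne h.1.symm) (fun h => hne h.2.symm)] at h1
    exact hR.1 _ _ h1 h1
  · rw [flipPair_iff (fun h => hne h.1.symm) (fun h => hzx h.2)] at h1
    rw [flipPair_iff (fun h => hzx h.1) (fun h => hzy h.1)] at h2
    exact hR.1 x y hxy (swo_trans hR h1 h2)

lemma compar_of_flip {R : X → X → Prop} {x y : X} (hR : IsSWO R)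
    (him : ImmAbove R x y) (hS : IsSWO (flipPair R x y)) {z : X}
    (hzx : z ≠ x) (hzy : z ≠ y) : (R z x ∨ R x z) ∧ (R z y ∨ R y z) := by
  have hxy := him.1
  have hne : x ≠ y := by rintro rfl; exact hR.1 _ _ hxy hxy
  constructor
  · by_contra h
    push_neg at h
    obtain ⟨h1, h2⟩ := h
    have hzy' : R z y := by
      by_contra h3
      exact hR.2 x z y h2 h3 hxy
    have nSzx : ¬ flipPair R x y z x := by
      rw [flipPair_iff (fun h => hzx h.1) (fun h => hzy h.1)]
      exact h1
    have := hS.2 z x y nSzx flipPair_not_xy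
    apply this
    rw [flipPair_iff (fun h => hzx h.1) (fun h => hzy h.1)]
    exact hzy'
  · by_contra h
    push_neg at h
    obtain ⟨h1, h2⟩ := h
    have hxz : R x z := by
      by_contra h3
      exact hR.2 x z y h3 h1 hxy
    have nSyz : ¬ flipPair R x y y z := by
      rw [flipPair_iff (fun h => hne h.1.symm) (fun h => hzx h.2)]
      exact h2
    have := hS.2 x y z flipPair_not_xy nSyz
    apply this
    rw [flipPair_iff (fun h => hzy h.2) (fun h => hne h.1)]
    exact hxz

/-- Merge the adjacent pair `x` over `y` of `R` into a tie. -/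
def mergeXY (R : X → X → Prop) (x y : X) : X → X → Prop :=
  fun a b => R a b ∧ ¬(a = x ∧ b = y)

lemma merge_swo {R : X → X → Prop} {x y : X} (hR : IsSWO R) (him : ImmAbove R x y)
    (hcomp : ∀ z, z ≠ x → z ≠ y → (R z x ∨ R x z) ∧ (R z y ∨ R y z)) :
    IsSWO (mergeXY R x y) := by
  have hxy := him.1
  have hne : x ≠ y := by rintro rfl; exact hR.1 _ _ hxy hxy
  constructor
  · rintro a b ⟨hab, -⟩ ⟨hba, -⟩
    exact hR.1 a b hab hba
  · rintro a b c hab hbc ⟨hRac, hac2⟩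
    by_cases h1 : R a b
    · have hb : a = x ∧ b = y := by
        by_contra h; exact hab ⟨h1, h⟩
      obtain rfl := hb.1.symm
      obtain rfl := hb.2.symm
      have hyc : ¬ R y c := by
        intro h
        exact hbc ⟨h, fun hh => hne hh.1.symm⟩
      have hcy : c ≠ y := fun h => hac2 ⟨rfl, h⟩
      have hcx : c ≠ x := by rintro rfl; exact hR.1 _ _ hRac hRac
      rcases (hcomp c hcx hcy).2 with h | h
      · exact him.2 c ⟨hRac, h⟩
      · exact hyc h
    · by_cases h2 : R b c
      · have hb : b = x ∧ c = y := by
          by_contra h; exact hbc ⟨h2, h⟩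
        obtain rfl := hb.1.symm
        obtain rfl := hb.2.symm
        have hax : a ≠ x := fun h => hac2 ⟨h, rfl⟩
        have hay : a ≠ y := by rintro rfl; exact hR.1 _ _ hRac hRac
        rcases (hcomp a hax hay).1 with h | h
        · exact h1 h
        · exact him.2 a ⟨h, hRac⟩
      · exact hR.2 a b c h1 h2 hRac

lemma merge_tie {R : X → X → Prop} {x y : X} (hR : IsSWO R) (him : ImmAbove R x y)
    (hcomp : ∀ z, z ≠ x → z ≠ y → (R z x ∨ R x z) ∧ (R z y ∨ R y z)) :
    IsTie (mergeXY R x y) {x, y} := by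
  have hxy := him.1
  have hne : x ≠ y := by rintro rfl; exact hR.1 _ _ hxy hxy
  refine ⟨?_, ?_, ?_⟩
  · rw [Finset.card_pair hne]
  · intro a ha b hb
    simp only [Finset.mem_insert, Finset.mem_singleton] at ha hb
    rcases ha with rfl | rfl <;> rcases hb with rfl | rfl
    · exact fun h => hR.1 _ _ h.1 h.1
    · exact fun h => h.2 ⟨rfl, rfl⟩
    · exact fun h => hR.1 _ _ hxy h.1
    · exact fun h => hR.1 _ _ h.1 h.1
  · intro z hz w hw
    simp only [Finset.mem_insert, Finset.mem_singleton] at hz hw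
    push_neg at hz
    obtain ⟨hzx, hzy⟩ := hz
    have hc := hcomp z hzx hzy
    rcases hw with rfl | rfl
    · rcases hc.1 with h | h
      · exact Or.inl ⟨h, fun hh => hzx hh.1⟩
      · exact Or.inr ⟨h, fun hh => hzy hh.2⟩
    · rcases hc.2 with h | h
      · exact Or.inl ⟨h, fun hh => hzx hh.1⟩
      · exact Or.inr ⟨h, fun hh => hne hh.1.symm⟩

lemma slo_pair {x y : X} (hne : x ≠ y) :
    StrictLinOn (fun a b => a = x ∧ b = y) ({x, y} : Finset X) := by
  refine ⟨?_, ?_, ?_, ?_⟩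
  · rintro a b ⟨rfl, rfl⟩
    simp
  · rintro a ⟨rfl, h⟩
    exact hne h
  · rintro a b c ⟨rfl, rfl⟩ ⟨h, -⟩
    exact absurd h.symm hne
  · intro a ha b hb hab
    simp only [Finset.mem_insert, Finset.mem_singleton] at ha hb
    rcases ha with rfl | rfl <;> rcases hb with rfl | rfl <;> tauto

lemma break_merge_L {R : X → X → Prop} {x y : X} (hxy : R x y) :
    breakTie (mergeXY R x y) {x, y} (fun a b => a = x ∧ b = y) = R := by
  funext a b
  apply propext
  constructor
  · rintro (⟨h, -⟩ | ⟨-, -, rfl, rfl⟩)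
    · exact h
    · exact hxy
  · intro h
    by_cases hc : a = x ∧ b = y
    · obtain ⟨rfl, rfl⟩ := hc
      exact Or.inr ⟨by simp, by simp, rfl, rfl⟩
    · exact Or.inl ⟨h, hc⟩

lemma break_merge_L' {R : X → X → Prop} {x y : X} (hne : x ≠ y) :
    breakTie (mergeXY R x y) {x, y} (fun a b => a = y ∧ b = x) = flipPair R x y := by
  funext a b
  apply propext
  simp only [breakTie, mergeXY, flipPair, Finset.mem_insert, Finset.mem_singleton]
  by_cases h1 : a = x ∧ b = y
  · obtain ⟨h1a, h1b⟩ := h1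
    simp [h1a, h1b, hne, Ne.symm hne]
  · by_cases h2 : a = y ∧ b = x
    · obtain ⟨h2a, h2b⟩ := h2
      simp [h2a, h2b, hne, Ne.symm hne]
    · simp [h1, h2]

lemma break_merge_Lrev {R : X → X → Prop} {x y : X} (hyx : R y x) :
    breakTie (mergeXY R y x) {x, y} (fun a b => b = x ∧ a = y) = R := by
  funext a b
  apply propext
  simp only [breakTie, mergeXY, Finset.mem_insert, Finset.mem_singleton]
  by_cases h : a = y ∧ b = x
  · simp [h.1, h.2, hyx]
  · constructor
    · rintro (⟨hh, -⟩ | ⟨-, -, rfl, rfl⟩)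
      · exact hh
      · exact hyx
    · intro hh
      exact Or.inl ⟨hh, h⟩

lemma break_merge_L'rev {R : X → X → Prop} {x y : X} (hne : x ≠ y) :
    breakTie (mergeXY R y x) {x, y} (fun a b => b = y ∧ a = x) = flipPair R y x := by
  funext a b
  apply propext
  simp only [breakTie, mergeXY, flipPair, Finset.mem_insert, Finset.mem_singleton]
  by_cases h1 : a = y ∧ b = x
  · simp [h1.1, h1.2, hne, Ne.symm hne]
  · by_cases h2 : a = x ∧ b = y
    · simp [h2.1, h2.2, hne, Ne.symm hne]
    · rw [if_neg h1, if_neg h2]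
      constructor
      · rintro (⟨hh, -⟩ | ⟨-, -, hb, ha⟩)
        · exact hh
        · exact absurd ⟨ha, hb⟩ h2
      · intro hh
        exact Or.inl ⟨hh, h1⟩

end Aux

/-- on the domain of all profiles of strict weak orders,
Tiebreaking Compensation implies Preferential Compensation and hence
Preferential Equality. -/
theorem stmt6 (F : Profile V X → α)
    (hTC : TiebreakComp (SWOProfiles V X) F) :
    PrefComp (SWOProfiles V X) F ∧ PrefEqual (SWOProfiles V X) F := by
  have hPC : PrefComp (SWOProfiles V X) F := by
    intro P hP x y i hi j hj hij hIx hJy hP2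
    have hswoRi : IsSWO (P.ballot i) := hP.2 i hi
    have hswoRj : IsSWO (P.ballot j) := hP.2 j hj
    have hxy : P.ballot i x y := hIx.1
    have hyx : P.ballot j y x := hJy.1
    have hne : x ≠ y := by rintro rfl; exact hswoRi.1 _ _ hxy hxy
    have hbi : ((P.flipAt i x y).flipAt j y x).ballot i = flipPair (P.ballot i) x y := by
      show Function.update (Function.update P.ballot i _) j _ i = _
      rw [Function.update_of_ne hij, Function.update_self]
    have hb1j : (P.flipAt i x y).ballot j = P.ballot j :=
      Function.update_of_ne (Ne.symm hij) _ _
    have hbj : ((P.flipAt i x y).flipAt j y x).ballot j = flipPair (P.ballot j) y x := by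
      show Function.update (Function.update P.ballot i _) j _ j = _
      rw [Function.update_self, hb1j]
    have hSi : IsSWO (flipPair (P.ballot i) x y) := by
      have h := hP2.2 i hi
      rwa [hbi] at h
    have hSj : IsSWO (flipPair (P.ballot j) y x) := by
      have h := hP2.2 j hj
      rwa [hbj] at h
    have hcompi : ∀ z, z ≠ x → z ≠ y →
        (P.ballot i z x ∨ P.ballot i x z) ∧ (P.ballot i z y ∨ P.ballot i y z) :=
      fun z h1 h2 => compar_of_flip hswoRi hIx hSi h1 h2
    have hcompj : ∀ z, z ≠ y → z ≠ x →
        (P.ballot j z y ∨ P.ballot j y z) ∧ (P.ballot j z x ∨ P.ballot j x z) :=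
      fun z h1 h2 => compar_of_flip hswoRj hJy hSj h1 h2
    have hMi : IsSWO (mergeXY (P.ballot i) x y) := merge_swo hswoRi hIx hcompi
    have hMj : IsSWO (mergeXY (P.ballot j) y x) := merge_swo hswoRj hJy hcompj
    have hTi : IsTie (mergeXY (P.ballot i) x y) {x, y} := merge_tie hswoRi hIx hcompi
    have hTj : IsTie (mergeXY (P.ballot j) y x) {x, y} := by
      have h := merge_tie hswoRj hJy hcompj
      rwa [Finset.pair_comm] at h
    set Q : Profile V X := ⟨P.voters, Function.update
        (Function.update P.ballot i (mergeXY (P.ballot i) x y)) j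
        (mergeXY (P.ballot j) y x)⟩ with hQdef
    have hQbi : Q.ballot i = mergeXY (P.ballot i) x y := by
      show Function.update _ j _ i = _
      rw [Function.update_of_ne hij, Function.update_self]
    have hQbj : Q.ballot j = mergeXY (P.ballot j) y x := by
      show Function.update _ j _ j = _
      rw [Function.update_self]
    have hQmem : Q ∈ SWOProfiles V X := by
      refine ⟨hP.1, ?_⟩
      intro k hk
      rcases eq_or_ne k i with rfl | hki
      · rw [hQbi]; exact hMi
      rcases eq_or_ne k j with rfl | hkj
      · rw [hQbj]; exact hMj
      · have hkb : Q.ballot k = P.ballot k := by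
          show Function.update _ j _ k = _
          rw [Function.update_of_ne hkj, Function.update_of_ne hki]
        rw [hkb]
        exact hP.2 k hk
    have h1 := hTC Q hQmem i hi j hj hij {x, y} (fun a b => a = x ∧ b = y)
      (hQbi ▸ hTi) (hQbj ▸ hTj) (slo_pair hne)
    have h2 := hTC Q hQmem i hi j hj hij {x, y} (fun a b => a = y ∧ b = x)
      (hQbi ▸ hTi) (hQbj ▸ hTj) (by rw [Finset.pair_comm]; exact slo_pair (Ne.symm hne))
    beta_reduce at h1 h2
    have e1 : (Q.updBallot i (breakTie (Q.ballot i) {x, y} fun a b => a = x ∧ b = y)).updBallot j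
        (breakTie (Q.ballot j) {x, y} fun a b => b = x ∧ a = y) = P := by
      apply Profile.ext'
      · rfl
      funext k
      show Function.update (Function.update Q.ballot i _) j _ k = P.ballot k
      rcases eq_or_ne k j with rfl | hkj
      · rw [Function.update_self, hQbj, break_merge_Lrev hyx]
      rcases eq_or_ne k i with rfl | hki
      · rw [Function.update_of_ne hij, Function.update_self, hQbi, break_merge_L hxy]
      · rw [Function.update_of_ne hkj, Function.update_of_ne hki]
        show Function.update _ j _ k = _
        rw [Function.update_of_ne hkj, Function.update_of_ne hki]
    have e2 : (Q.updBallot i (breakTie (Q.ballot i) {x, y} fun a b => a = y ∧ b = x)).updBallot j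
        (breakTie (Q.ballot j) {x, y} fun a b => b = y ∧ a = x)
        = (P.flipAt i x y).flipAt j y x := by
      apply Profile.ext'
      · rfl
      funext k
      show Function.update (Function.update Q.ballot i _) j _ k
          = Function.update (Function.update P.ballot i _) j _ k
      rcases eq_or_ne k j with rfl | hkj
      · rw [Function.update_self, Function.update_self, hQbj,
          break_merge_L'rev hne, hb1j]
      rcases eq_or_ne k i with rfl | hki
      · rw [Function.update_of_ne hij, Function.update_of_ne hij,
          Function.update_self, Function.update_self, hQbi,
          break_merge_L' hne]
      · rw [Function.update_of_ne hkj, Function.update_of_ne hki,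
          Function.update_of_ne hkj, Function.update_of_ne hki]
        show Function.update _ j _ k = _
        rw [Function.update_of_ne hkj, Function.update_of_ne hki]
    rw [e1] at h1
    rw [e2] at h2
    exact (h1 hP).symm.trans (h2 hP2)
  refine ⟨hPC, ?_⟩
  intro P hP x y i hi j hj hij hIi hIj hDi hDj
  have hswoRi : IsSWO (P.ballot i) := hP.2 i hi
  have hxy : P.ballot i x y := hIi.1
  have hne : x ≠ y := by rintro rfl; exact hswoRi.1 _ _ hxy hxy
  have hyx : ¬ P.ballot i y x := hswoRi.1 _ _ hxy
  have hb1j : (P.flipAt i x y).ballot j = P.ballot j :=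
    Function.update_of_ne (Ne.symm hij) _ _
  have hb1i : (P.flipAt i x y).ballot i = flipPair (P.ballot i) x y := by
    show Function.update _ i _ i = _
    rw [Function.update_self]
  have hImj : ImmAbove ((P.flipAt i x y).ballot j) x y := by
    rw [hb1j]; exact hIj
  have hImi : ImmAbove ((P.flipAt i x y).ballot i) y x := by
    rw [hb1i]; exact immAbove_flip hswoRi hIi
  have E : ((P.flipAt i x y).flipAt j x y).flipAt i y x = P.flipAt j x y := by
    apply Profile.ext'
    · rfl
    funext k
    show Function.update (Function.update (Function.update P.ballot i _) j _) i _ k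
        = Function.update P.ballot j _ k
    rcases eq_or_ne k i with rfl | hki
    · rw [Function.update_self, Function.update_of_ne hij]
      have hin : ((P.flipAt k x y).flipAt j x y).ballot k = flipPair (P.ballot k) x y := by
        show Function.update (Function.update P.ballot k _) j _ k = _
        rw [Function.update_of_ne hij, Function.update_self]
      rw [hin, flipPair_flip_flip hxy hyx]
    rcases eq_or_ne k j with rfl | hkj
    · rw [Function.update_of_ne hki, Function.update_self, Function.update_self, hb1j]
    · rw [Function.update_of_ne hki, Function.update_of_ne hkj,
        Function.update_of_ne hki, Function.update_of_ne hkj]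
  have h := hPC (P.flipAt i x y) hDi x y j hj i hi (Ne.symm hij) hImj hImi
    (by rw [E]; exact hDj)
  rw [E] at h
  exact h

end
end

section
/- A head-to-head voting rule on the domain of all profiles (of strict weak orders) is C2 if and only if it satisfies Neutral Indifference. -/
/- Formalization of voting with ranked ballots (strict preference ballots).
A profile assigns to each voter in a finite voter set a binary relation
(intended: a strict weak order) on the candidate set `X`. -/

open scoped Classical

noncomputable section

variable {V X α : Type*}

lemma count_addIndiff (P : Profile V X) (i : V) (hi : i ∉ P.voters) (a b : X) :
    (P.addVoter i (fun _ _ => False)).count a b = P.count a b := by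
  unfold Profile.count Profile.addVoter
  simp only
  rw [Finset.filter_insert]
  rw [if_neg (by simp)]
  apply congrArg
  apply Finset.filter_congr
  intro j hj
  have : j ≠ i := fun h => hi (h ▸ hj)
  simp [Function.update_apply, this]

lemma addIndiff_mem (P : Profile V X) (hP : P ∈ SWOProfiles V X) (i : V) :
    P.addVoter i (fun _ _ => False) ∈ SWOProfiles V X := by
  refine ⟨⟨i, Finset.mem_insert_self _ _⟩, ?_⟩
  intro j hj
  unfold Profile.addVoter
  simp only
  rcases eq_or_ne j i with h | h
  · subst h; simp [Function.update_self, IsSWO]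
  · rw [Function.update_of_ne h]
    exact hP.2 j (by
      rcases Finset.mem_insert.mp hj with h' | h'
      · exact absurd h' h
      · exact h')

lemma pad_indiff [Infinite V] (F : Profile V X → α)
    (hNI : NeutralIndifference (SWOProfiles V X) F) (n : ℕ) :
    ∀ P ∈ SWOProfiles V X, ∃ P' ∈ SWOProfiles V X,
      F P' = F P ∧ (∀ a b, P'.count a b = P.count a b) ∧
      P'.voters.card = P.voters.card + n := by
  induction n with
  | zero => intro P hP; exact ⟨P, hP, rfl, fun _ _ => rfl, rfl⟩
  | succ n ih =>
    intro P hP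
    obtain ⟨P', hP', hF, hc, hcard⟩ := ih P hP
    obtain ⟨i, hi⟩ := P'.voters.exists_notMem
    refine ⟨P'.addVoter i (fun _ _ => False), addIndiff_mem P' hP' i, ?_, ?_, ?_⟩
    · rw [← hNI P' hP' i hi (addIndiff_mem P' hP' i)]; exact hF
    · intro a b; rw [count_addIndiff P' i hi a b]; exact hc a b
    · show (insert i P'.voters).card = _
      rw [Finset.card_insert_of_notMem hi, hcard]
      ring

/-- a head-to-head voting rule on the domain of all profiles of
strict weak orders is C2 iff it satisfies Neutral Indifference. -/
theorem stmt10 [Infinite V] (F : Profile V X → α)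
    (hH : HeadToHead (SWOProfiles V X) F) :
    C2 (SWOProfiles V X) F ↔ NeutralIndifference (SWOProfiles V X) F := by
  constructor
  · intro hC2 P hP i hi hmem
    exact hC2 P hP _ hmem (fun a b => (count_addIndiff P i hi a b).symm)
  · intro hNI P hP Q hQ hcount
    rcases le_total P.voters.card Q.voters.card with h | h
    · obtain ⟨P', hP', hF, hc, hcard⟩ :=
        pad_indiff F hNI (Q.voters.card - P.voters.card) P hP
      rw [← hF]
      refine hH P' hP' Q hQ (fun a b => (hc a b).trans (hcount a b)) ?_
      omega
    · obtain ⟨Q', hQ', hF, hc, hcard⟩ :=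
        pad_indiff F hNI (P.voters.card - Q.voters.card) Q hQ
      rw [← hF]
      refine hH P hP Q' hQ' (fun a b => (hcount a b).trans (hc a b).symm) ?_
      omega

end
end

section
/- For any two profiles P and P' of strict weak orders with the same margin matrix, there exist profiles Q and Q' obtained from P and P' respectively by adding only (possibly nonlinear) reversal pairs of voters and voters with the empty (fully indifferent) ballot, such that Q and Q' have the same head-to-head information: #_Q = #_{Q'} and |V(Q)| = |V(Q')|. -/
/- Formalization of voting with ranked ballots (strict preference ballots).
A profile assigns to each voter in a finite voter set a binary relation
(intended: a strict weak order) on the candidate set `X`. -/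

open scoped Classical

noncomputable section

variable {V X α : Type*}

/-- One step of extending a profile: adding a (possibly nonlinear) reversal
pair of voters, or adding a voter with the empty (fully indifferent) ballot. -/
def ExtStep (P Q : Profile V X) : Prop :=
  (∃ (i j : V) (S : X → X → Prop), i ∉ P.voters ∧ j ∉ P.voters ∧ i ≠ j ∧
      IsSWO S ∧ Q = (P.addVoter i S).addVoter j (fun a b => S b a)) ∨
  (∃ i : V, i ∉ P.voters ∧ Q = P.addVoter i (fun _ _ => False))

section AuxStmt11

lemma isSWO_rev {S : X → X → Prop} (h : IsSWO S) : IsSWO (fun a b => S b a) :=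
  ⟨fun a b hab => h.1 b a hab, fun a b c h1 h2 => h.2 c b a h2 h1⟩

lemma isSWO_ltg (g : X → ℕ) : IsSWO (fun x y => g x < g y) :=
  ⟨by intro a b h1 h2; omega, by intro a b c h1 h2 h3; omega⟩

lemma ind_ltg (g : X → ℕ) (x y : X) :
    ((if g x < g y then 1 else 0) + (if g y < g x then 1 else 0) : ℕ)
      = if g x = g y then 0 else 1 := by
  split_ifs <;> omega

lemma count_addVoter (P : Profile V X) {i : V} (hi : i ∉ P.voters)
    (S : X → X → Prop) (a b : X) :
    (P.addVoter i S).count a b = P.count a b + (if S a b then 1 else 0) := by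
  classical
  have hfilter : (P.voters.filter (fun k => Function.update P.ballot i S k a b))
      = P.voters.filter (fun k => P.ballot k a b) := by
    apply Finset.filter_congr
    intro k hk
    have hki : k ≠ i := fun h => hi (h ▸ hk)
    simp [Function.update_of_ne hki]
  show ((insert i P.voters).filter (fun k => Function.update P.ballot i S k a b)).card = _
  rw [Finset.filter_insert]
  by_cases hS : S a b
  · rw [if_pos (by simpa using hS), if_pos hS,
      Finset.card_insert_of_notMem (fun h => hi (Finset.mem_of_mem_filter i h)), hfilter]
    rfl
  · rw [if_neg (by simpa using hS), if_neg hS, hfilter, add_zero]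
    rfl

lemma addVoter_mem {P : Profile V X} (hP : P ∈ SWOProfiles V X) {i : V}
    (hi : i ∉ P.voters) {S : X → X → Prop} (hS : IsSWO S) :
    P.addVoter i S ∈ SWOProfiles V X := by
  classical
  refine ⟨⟨i, Finset.mem_insert_self i _⟩, ?_⟩
  intro k hk
  rcases Finset.mem_insert.1 hk with rfl | hk'
  · simpa [Profile.addVoter] using hS
  · have hki : k ≠ i := fun h => hi (h ▸ hk')
    simpa [Profile.addVoter, Function.update_of_ne hki] using hP.2 k hk'

lemma exists_revpair [Infinite V] (P : Profile V X) {S : X → X → Prop} (hS : IsSWO S) :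
    ∃ Q : Profile V X, ExtStep P Q ∧
      (∀ a b, Q.count a b = P.count a b
        + ((if S a b then 1 else 0) + (if S b a then 1 else 0))) ∧
      Q.voters.card = P.voters.card + 2 ∧
      (P ∈ SWOProfiles V X → Q ∈ SWOProfiles V X) := by
  obtain ⟨i, hi⟩ := Infinite.exists_notMem_finset P.voters
  obtain ⟨j, hj⟩ := Infinite.exists_notMem_finset (insert i P.voters)
  have hjv : j ∉ P.voters := fun h => hj (Finset.mem_insert_of_mem h)
  have hij : i ≠ j := fun h => hj (h ▸ Finset.mem_insert_self i _)
  have hj2 : j ∉ (P.addVoter i S).voters := hj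
  refine ⟨(P.addVoter i S).addVoter j (fun a b => S b a),
    Or.inl ⟨i, j, S, hi, hjv, hij, hS, rfl⟩, ?_, ?_, ?_⟩
  · intro a b
    rw [count_addVoter _ hj2, count_addVoter _ hi, add_assoc]
  · show (insert j (insert i P.voters)).card = _
    rw [Finset.card_insert_of_notMem hj, Finset.card_insert_of_notMem hi]
  · intro hPm
    exact addVoter_mem (addVoter_mem hPm hi hS) hj2 (isSWO_rev hS)

lemma count_diag {P : Profile V X} (hP : P ∈ SWOProfiles V X) (a : X) :
    P.count a a = 0 := by
  classical
  rw [Profile.count, Finset.card_eq_zero, Finset.filter_eq_empty_iff]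
  intro i hi hr
  exact (hP.2 i hi).1 a a hr hr

lemma exists_empties [Infinite V] (n : ℕ) (P : Profile V X) :
    ∃ Q : Profile V X, Relation.ReflTransGen ExtStep P Q ∧
      (∀ a b, Q.count a b = P.count a b) ∧ Q.voters.card = P.voters.card + n := by
  induction n with
  | zero => exact ⟨P, .refl, fun _ _ => rfl, rfl⟩
  | succ n IH =>
    obtain ⟨Q, hQ, hc, hcard⟩ := IH
    obtain ⟨i, hi⟩ := Infinite.exists_notMem_finset Q.voters
    refine ⟨Q.addVoter i (fun _ _ => False), hQ.tail (Or.inr ⟨i, hi, rfl⟩), ?_, ?_⟩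
    · intro a b; rw [count_addVoter _ hi, if_neg (fun h => h), add_zero]; exact hc a b
    · show (insert i Q.voters).card = _
      rw [Finset.card_insert_of_notMem hi, hcard]; omega

lemma step_lemma [Infinite V] [Fintype X] (P P' : Profile V X)
    (hP : P ∈ SWOProfiles V X) (hP' : P' ∈ SWOProfiles V X)
    (hm : ∀ a b, P.margin a b = P'.margin a b) {a b : X} (hab : a ≠ b)
    (hlt : P'.count a b < P.count a b) :
    ∃ P₁ P₁' : Profile V X, ExtStep P P₁ ∧ ExtStep P' P₁' ∧
      P₁ ∈ SWOProfiles V X ∧ P₁' ∈ SWOProfiles V X ∧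
      (∀ x y, P₁.margin x y = P₁'.margin x y) ∧
      (∑ p : X × X, ((P₁.count p.1 p.2 : ℤ) - (P₁'.count p.1 p.2 : ℤ)).natAbs) <
        (∑ p : X × X, ((P.count p.1 p.2 : ℤ) - (P'.count p.1 p.2 : ℤ)).natAbs) := by
  classical
  set e := Fintype.equivFin X with he
  have geq : ∀ u v : X, ((e u : ℕ) = (e v : ℕ)) ↔ u = v := fun u v =>
    ⟨fun h => e.injective (Fin.val_injective h), fun h => by rw [h]⟩
  set g : X → ℕ := fun x => (e x : ℕ) with hgdef
  set gm : X → ℕ := fun x => (e (if x = b then a else x) : ℕ) with hgmdef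
  obtain ⟨P₁, hs1, hc1, hcard1, hmem1⟩ := exists_revpair P (isSWO_ltg gm)
  obtain ⟨P₁', hs1', hc1', hcard1', hmem1'⟩ := exists_revpair P' (isSWO_ltg g)
  have hIS : ∀ x y, P₁.count x y = P.count x y + (if gm x = gm y then 0 else 1) := by
    intro x y; rw [hc1 x y]; congr 1; split_ifs <;> omega
  have hIL : ∀ x y, P₁'.count x y = P'.count x y + (if x = y then 0 else 1) := by
    intro x y; rw [hc1' x y]; congr 1
    by_cases h : x = y
    · subst h; rw [if_pos rfl]; split_ifs <;> omega
    · have hg : g x ≠ g y := fun hh => h ((geq x y).1 hh)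
      rw [if_neg h]; split_ifs <;> omega
  have hgm_eq : ∀ x y : X, gm x = gm y ↔ (x = y ∨ (x = a ∧ y = b) ∨ (x = b ∧ y = a)) := by
    intro x y
    rw [hgmdef]
    simp only
    rw [geq]
    by_cases hx : x = b
    · by_cases hy : y = b
      · subst hx; subst hy; simp
      · subst hx
        rw [if_pos rfl, if_neg hy]
        constructor
        · intro h; exact Or.inr (Or.inr ⟨rfl, h.symm⟩)
        · rintro (rfl | ⟨rfl, rfl⟩ | ⟨-, rfl⟩)
          · exact absurd rfl hy
          · exact absurd rfl (Ne.symm hab)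
          · rfl
    · by_cases hy : y = b
      · subst hy
        rw [if_neg hx, if_pos rfl]
        constructor
        · intro h; exact Or.inr (Or.inl ⟨h, rfl⟩)
        · rintro (rfl | ⟨rfl, -⟩ | ⟨rfl, rfl⟩)
          · exact absurd rfl hx
          · rfl
          · exact absurd rfl (Ne.symm hab)
      · rw [if_neg hx, if_neg hy]
        constructor
        · intro h; exact Or.inl h
        · rintro (rfl | ⟨rfl, rfl⟩ | ⟨rfl, rfl⟩)
          · rfl
          · exact absurd rfl hy
          · exact absurd rfl hx
  -- margins preserved
  have hgmsym : ∀ x y, (if gm x = gm y then (0:ℕ) else 1) = (if gm y = gm x then 0 else 1) := by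
    intro x y; by_cases h : gm x = gm y
    · rw [if_pos h, if_pos h.symm]
    · rw [if_neg h, if_neg (fun hh => h hh.symm)]
  have hm1 : ∀ x y, P₁.margin x y = P.margin x y := by
    intro x y
    show (P₁.count x y : ℤ) - P₁.count y x = (P.count x y : ℤ) - P.count y x
    rw [hIS x y, hIS y x, ← hgmsym x y]
    push_cast; ring
  have hm1' : ∀ x y, P₁'.margin x y = P'.margin x y := by
    intro x y
    show (P₁'.count x y : ℤ) - P₁'.count y x = (P'.count x y : ℤ) - P'.count y x
    have : (if x = y then (0:ℕ) else 1) = (if y = x then 0 else 1) := by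
      by_cases h : x = y
      · rw [if_pos h, if_pos h.symm]
      · rw [if_neg h, if_neg (fun hh => h hh.symm)]
    rw [hIL x y, hIL y x, ← this]
    push_cast; ring
  have hdsym : ∀ x y, (P.count x y : ℤ) - P'.count x y = (P.count y x : ℤ) - P'.count y x := by
    intro x y
    have h1 := hm x y
    rw [Profile.margin, Profile.margin] at h1
    omega
  refine ⟨P₁, P₁', hs1, hs1', hmem1 hP, hmem1' hP',
    fun x y => (hm1 x y).trans ((hm x y).trans (hm1' x y).symm), ?_⟩
  apply Finset.sum_lt_sum
  · rintro ⟨x, y⟩ -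
    simp only
    rw [hIS x y, hIL x y]
    by_cases hxy : (x = a ∧ y = b) ∨ (x = b ∧ y = a)
    · have hne : x ≠ y := by rcases hxy with ⟨rfl, rfl⟩ | ⟨rfl, rfl⟩; exact hab; exact Ne.symm hab
      rw [if_pos ((hgm_eq x y).2 (Or.inr hxy)), if_neg hne]
      have hge : P'.count x y < P.count x y := by
        have hd : (P.count x y : ℤ) - P'.count x y = (P.count a b : ℤ) - P'.count a b := by
          rcases hxy with ⟨rfl, rfl⟩ | ⟨rfl, rfl⟩
          · rfl
          · exact (hdsym x y).symm ▸ rfl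
        omega
      omega
    · by_cases hne : x = y
      · subst hne
        rw [if_pos ((hgm_eq x x).2 (Or.inl rfl)), if_pos rfl]
        omega
      · rw [if_neg (fun h => by rcases (hgm_eq x y).1 h with h | h; exact hne h; exact hxy h),
          if_neg hne]
        omega
  · refine ⟨(a, b), Finset.mem_univ _, ?_⟩
    simp only
    rw [hIS a b, hIL a b]
    rw [if_pos ((hgm_eq a b).2 (Or.inr (Or.inl ⟨rfl, rfl⟩))), if_neg hab]
    omega

lemma key_lemma [Infinite V] [Fintype X] :
    ∀ N : ℕ, ∀ P P' : Profile V X, P ∈ SWOProfiles V X → P' ∈ SWOProfiles V X →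
    (∀ a b, P.margin a b = P'.margin a b) →
    (∑ p : X × X, ((P.count p.1 p.2 : ℤ) - (P'.count p.1 p.2 : ℤ)).natAbs) = N →
    ∃ Q Q' : Profile V X,
      Relation.ReflTransGen ExtStep P Q ∧
      Relation.ReflTransGen ExtStep P' Q' ∧
      (∀ a b : X, Q.count a b = Q'.count a b) ∧
      Q.voters.card = Q'.voters.card := by
  intro N
  induction N using Nat.strong_induction_on with
  | _ N IH =>
  intro P P' hP hP' hm hsum
  by_cases hc : ∀ a b : X, P.count a b = P'.count a b
  · -- counts equal, fix cardinalities
    obtain ⟨Q, hQ, hQc, hQcard⟩ :=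
      exists_empties (max P.voters.card P'.voters.card - P.voters.card) P
    obtain ⟨Q', hQ', hQc', hQcard'⟩ :=
      exists_empties (max P.voters.card P'.voters.card - P'.voters.card) P'
    refine ⟨Q, Q', hQ, hQ', ?_, ?_⟩
    · intro a b; rw [hQc a b, hQc' a b]; exact hc a b
    · rw [hQcard, hQcard']
      have := le_max_left P.voters.card P'.voters.card
      have := le_max_right P.voters.card P'.voters.card
      omega
  · push_neg at hc
    obtain ⟨a, b, hne⟩ := hc
    have hab : a ≠ b := by
      rintro rfl
      rw [count_diag hP, count_diag hP'] at hne
      exact hne rfl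
    rcases lt_or_gt_of_ne hne with hlt | hlt
    · -- P.count a b < P'.count a b : apply step to (P', P)
      have hsym : ∀ x y, (∑ p : X × X, (((x : Profile V X).count p.1 p.2 : ℤ)
          - ((y : Profile V X).count p.1 p.2 : ℤ)).natAbs)
          = ∑ p : X × X, ((y.count p.1 p.2 : ℤ) - (x.count p.1 p.2 : ℤ)).natAbs := by
        intro x y
        apply Finset.sum_congr rfl
        intro p _
        omega
      obtain ⟨P₁', P₁, hs1', hs1, hmem1', hmem1, hm1, hdec⟩ :=
        step_lemma P' P hP' hP (fun x y => (hm x y).symm) hab hlt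
      rw [hsym P' P, hsum] at hdec
      obtain ⟨Q', Q, hQ', hQ, hqc, hqcard⟩ :=
        IH _ hdec P₁' P₁ hmem1' hmem1 hm1 rfl
      exact ⟨Q, Q', Relation.ReflTransGen.head hs1 hQ,
        Relation.ReflTransGen.head hs1' hQ', fun x y => (hqc x y).symm, hqcard.symm⟩
    · obtain ⟨P₁, P₁', hs1, hs1', hmem1, hmem1', hm1, hdec⟩ :=
        step_lemma P P' hP hP' hm hab hlt
      rw [hsum] at hdec
      obtain ⟨Q, Q', hQ, hQ', hqc, hqcard⟩ :=
        IH _ hdec P₁ P₁' hmem1 hmem1' hm1 rfl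
      exact ⟨Q, Q', Relation.ReflTransGen.head hs1 hQ,
        Relation.ReflTransGen.head hs1' hQ', hqc, hqcard⟩

end AuxStmt11

/-- any two profiles of strict weak orders with the same margin
matrix can be extended, by adding only reversal pairs and empty-ballot voters,
to profiles with the same head-to-head information. -/
theorem stmt11 [Infinite V] [Fintype X]
    (P P' : Profile V X) (hP : P ∈ SWOProfiles V X)
    (hP' : P' ∈ SWOProfiles V X)
    (hm : ∀ a b : X, P.margin a b = P'.margin a b) :
    ∃ Q Q' : Profile V X,
      Relation.ReflTransGen ExtStep P Q ∧
      Relation.ReflTransGen ExtStep P' Q' ∧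
      (∀ a b : X, Q.count a b = Q'.count a b) ∧
      Q.voters.card = Q'.voters.card := by
  exact key_lemma _ P P' hP hP' hm rfl

end
end

section
/- The Pareto voting rule, which outputs the set of candidates not Pareto-dominated by any other candidate, is a head-to-head voting rule, satisfies Preferential Equality (and Preferential Compensation and Tiebreaking Compensation), but does not satisfy Neutral Reversal (and hence is not margin-based). -/
/- Formalization of voting with ranked ballots (strict preference ballots).
A profile assigns to each voter in a finite voter set a binary relation
(intended: a strict weak order) on the candidate set `X`. -/

open scoped Classical

noncomputable section

variable {V X α : Type*}

/-- The Pareto rule: the candidates not Pareto-dominated by any other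
candidate. -/
def Pareto [Fintype X] (P : Profile V X) : Finset X :=
  Finset.univ.filter (fun y => ¬ ∃ x, x ≠ y ∧ ∀ i ∈ P.voters, P.ballot i x y)

/-- Unanimity on a pair is equivalent to the count being the number of voters. -/
lemma count_eq_card_iff (P : Profile V X) (a b : X) :
    P.count a b = P.voters.card ↔ ∀ i ∈ P.voters, P.ballot i a b := by
  constructor
  · intro h i hi
    have hsub : P.voters.filter (fun i => P.ballot i a b) = P.voters :=
      Finset.eq_of_subset_of_card_le (Finset.filter_subset _ _) (le_of_eq h.symm)
    exact Finset.filter_eq_self.mp hsub i hi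
  · intro h
    unfold Profile.count
    rw [Finset.filter_true_of_mem h]

/-- The Pareto set only depends on which pairs are unanimously ranked. -/
lemma pareto_congr [Fintype X] (P Q : Profile V X)
    (h : ∀ a b : X, a ≠ b →
      ((∀ i ∈ P.voters, P.ballot i a b) ↔ (∀ i ∈ Q.voters, Q.ballot i a b))) :
    Pareto P = Pareto Q := by
  ext y
  simp only [Pareto, Finset.mem_filter, Finset.mem_univ, true_and]
  constructor
  · rintro hy ⟨x, hxy, hall⟩
    exact hy ⟨x, hxy, (h x y hxy).mpr hall⟩
  · rintro hy ⟨x, hxy, hall⟩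
    exact hy ⟨x, hxy, (h x y hxy).mp hall⟩

lemma flipPair_eq (R : X → X → Prop) (x y a b : X)
    (h1 : ¬ (a = x ∧ b = y)) (h2 : ¬ (a = y ∧ b = x)) :
    flipPair R x y a b ↔ R a b := by
  simp [flipPair, h1, h2]

lemma updBallot_ballot (P : Profile V X) (i k : V) (R : X → X → Prop) (a b : X) :
    (P.updBallot i R).ballot k a b ↔ if k = i then R a b else P.ballot k a b := by
  simp [Profile.updBallot, Function.update_apply, ite_apply]

lemma flipAt_ballot (P : Profile V X) (m k : V) (x y a b : X) :
    (P.flipAt m x y).ballot k a b ↔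
      if k = m then flipPair (P.ballot m) x y a b else P.ballot k a b :=
  updBallot_ballot P m k _ a b

lemma flipPair_self (R : X → X → Prop) (x y : X) : ¬ flipPair R x y x y := by
  simp [flipPair]

lemma flipPair_rev (R : X → X → Prop) (x y : X) (h : x ≠ y) : flipPair R x y y x := by
  simp [flipPair, h, Ne.symm h]

/-- the Pareto rule is head-to-head and satisfies Preferential
Equality, Preferential Compensation, and Tiebreaking Compensation, but
violates Neutral Reversal and is not margin-based. -/
theorem stmt13 [Infinite V] [Fintype X] (hX : 2 ≤ Fintype.card X) :
    HeadToHead (SWOProfiles V X) (Pareto (V := V) (X := X)) ∧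
    PrefEqual (SWOProfiles V X) (Pareto (V := V) (X := X)) ∧
    PrefComp (SWOProfiles V X) (Pareto (V := V) (X := X)) ∧
    TiebreakComp (SWOProfiles V X) (Pareto (V := V) (X := X)) ∧
    ¬ NeutralReversal (SWOProfiles V X) (Pareto (V := V) (X := X)) ∧
    ¬ MarginBased (SWOProfiles V X) (Pareto (V := V) (X := X)) := by
  classical
  -- the counterexample used for the two negative parts
  have e := Fintype.equivFin X
  set L : X → X → Prop := fun a b => e a < e b with hLdef
  have hLasym : ∀ a b, L a b → ¬ L b a := fun a b h => lt_asymm h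
  have hLlin : IsLin L := by
    refine ⟨⟨hLasym, fun a b c hab hbc => ?_⟩, fun a b hne => ?_⟩
    · simp only [hLdef, not_lt] at *
      exact le_trans hbc hab
    · have : e a ≠ e b := fun h => hne (e.injective h)
      exact lt_or_gt_of_ne this
  have h0 : (0 : ℕ) < Fintype.card X := by omega
  have h1 : (1 : ℕ) < Fintype.card X := by omega
  set x : X := e.symm ⟨0, h0⟩ with hxdef
  set y : X := e.symm ⟨1, h1⟩ with hydef
  have hxy : x ≠ y := by
    intro h
    have := e.symm.injective h
    simp at this
  have hLxy : L x y := by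
    simp [hLdef, hxdef, hydef]
  have i0 : V := Classical.arbitrary V
  obtain ⟨i1, hi1⟩ := Infinite.exists_notMem_finset ({i0} : Finset V)
  obtain ⟨i2, hi2⟩ := Infinite.exists_notMem_finset ({i0, i1} : Finset V)
  have hi10 : i1 ≠ i0 := by simpa using hi1
  have hi20 : i2 ≠ i0 := by intro h; exact hi2 (by simp [h])
  have hi21 : i2 ≠ i1 := by intro h; exact hi2 (by simp [h])
  set P0 : Profile V X := ⟨{i0}, fun _ => L⟩ with hP0def
  set Q0 : Profile V X := (P0.addVoter i1 L).addVoter i2 (fun a b => L b a) with hQ0def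
  have hP0 : P0 ∈ SWOProfiles V X := ⟨⟨i0, Finset.mem_singleton_self i0⟩, fun i _ => hLlin.1⟩
  have hQ0voters : Q0.voters = insert i2 (insert i1 {i0}) := rfl
  have hQball2 : Q0.ballot i2 = fun a b => L b a := by
    show Function.update _ i2 _ i2 = _
    rw [Function.update_self]
  have hQball : ∀ k, k ≠ i2 → Q0.ballot k = L := by
    intro k hk
    show Function.update (Function.update (fun _ => L) i1 L) i2 _ k = L
    rw [Function.update_of_ne hk, Function.update_apply]
    split <;> rfl
  have hQ0 : Q0 ∈ SWOProfiles V X := by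
    refine ⟨⟨i2, by rw [hQ0voters]; exact Finset.mem_insert_self _ _⟩, fun i _ => ?_⟩
    by_cases h : i = i2
    · subst h; rw [hQball2]
      exact ⟨fun a b hab => hLasym b a hab, fun a b c hab hbc => hLlin.1.2 c b a hbc hab⟩
    · rw [hQball i h]; exact hLlin.1
  have hyP : y ∉ Pareto P0 := by
    simp only [Pareto, Finset.mem_filter, Finset.mem_univ, true_and, not_not]
    exact ⟨x, hxy, fun i _ => hLxy⟩
  have hyQ : y ∈ Pareto Q0 := by
    simp only [Pareto, Finset.mem_filter, Finset.mem_univ, true_and]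
    rintro ⟨z, hzy, hall⟩
    have hz1 : Q0.ballot i1 z y := hall i1 (by rw [hQ0voters]; simp)
    have hz2 : Q0.ballot i2 z y := hall i2 (by rw [hQ0voters]; simp)
    rw [hQball i1 (Ne.symm hi21)] at hz1
    rw [hQball2] at hz2
    exact hLasym z y hz1 hz2
  have hPQne : Pareto P0 ≠ Pareto Q0 := by
    intro h; rw [h] at hyP; exact hyP hyQ
  -- count computations for the margin argument
  have hPcount : ∀ a b, P0.count a b = if L a b then 1 else 0 := by
    intro a b
    by_cases h : L a b <;> simp [Profile.count, hP0def, Finset.filter_singleton, h]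
  have hQcount : ∀ a b, Q0.count a b =
      (if L b a then 1 else 0) + ((if L a b then 1 else 0) + (if L a b then 1 else 0)) := by
    intro a b
    show (Finset.filter (fun i => Q0.ballot i a b) (insert i2 (insert i1 ({i0} : Finset V)))).card = _
    rw [Finset.card_filter,
      Finset.sum_insert (by simp [hi21, hi20]),
      Finset.sum_insert (by simp [hi10]),
      Finset.sum_singleton]
    rw [hQball i1 (Ne.symm hi21), hQball i0 (Ne.symm hi20), hQball2]
    by_cases h : L b a <;> by_cases h2 : L a b <;> simp [h, h2]
  have hmargin : ∀ a b, P0.margin a b = Q0.margin a b := by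
    intro a b
    unfold Profile.margin
    rw [hPcount a b, hPcount b a, hQcount a b, hQcount b a]
    push_cast
    ring
  refine ⟨?_, ?_, ?_, ?_, ?_, ?_⟩
  · -- HeadToHead
    intro P hP Q hQ hcount hcard
    apply pareto_congr
    intro a b _
    rw [← count_eq_card_iff, ← count_eq_card_iff, hcount a b, hcard]
  · -- PrefEqual
    rintro P ⟨hne, hSWO⟩ u v i hi j hj hij hIi hIj _ _
    have huv : u ≠ v := by
      intro h; subst h; exact (hSWO i hi).1 u u hIi.1 hIi.1
    apply pareto_congr
    intro a b hab
    by_cases h1 : a = u ∧ b = v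
    · obtain ⟨rfl, rfl⟩ := h1
      constructor <;> intro h
      · have := h i hi
        rw [flipAt_ballot, if_pos rfl] at this
        exact (flipPair_self _ _ _ this).elim
      · have := h j hj
        rw [flipAt_ballot, if_pos rfl] at this
        exact (flipPair_self _ _ _ this).elim
    · by_cases h2 : a = v ∧ b = u
      · obtain ⟨rfl, rfl⟩ := h2
        constructor <;> intro h
        · have := h j hj
          rw [flipAt_ballot, if_neg (Ne.symm hij)] at this
          exact ((hSWO j hj).1 b a hIj.1 this).elim
        · have := h i hi
          rw [flipAt_ballot, if_neg hij] at this
          exact ((hSWO i hi).1 b a hIi.1 this).elim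
      · have gen : ∀ m : V, (∀ k ∈ P.voters, (P.flipAt m u v).ballot k a b) ↔
            (∀ k ∈ P.voters, P.ballot k a b) := by
          intro m
          refine forall_congr' fun k => imp_congr_right fun _ => ?_
          rw [flipAt_ballot]
          split_ifs with hk
          · subst hk; exact flipPair_eq _ u v a b h1 h2
          · exact Iff.rfl
        exact (gen i).trans (gen j).symm
  · -- PrefComp
    rintro P ⟨hne, hSWO⟩ u v i hi j hj hij hIi hIj _
    have huv : u ≠ v := by
      intro h; subst h; exact (hSWO i hi).1 u u hIi.1 hIi.1
    set Q := (P.flipAt i u v).flipAt j v u with hQdef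
    have hQvot : Q.voters = P.voters := rfl
    have hQj : ∀ a b, Q.ballot j a b ↔ flipPair (P.ballot j) v u a b := by
      intro a b
      rw [hQdef, flipAt_ballot, if_pos rfl]
      have : (P.flipAt i u v).ballot j = P.ballot j :=
        Function.update_of_ne (Ne.symm hij) _ _
      rw [this]
    have hQi : ∀ a b, Q.ballot i a b ↔ flipPair (P.ballot i) u v a b := by
      intro a b
      rw [hQdef, flipAt_ballot, if_neg hij, flipAt_ballot, if_pos rfl]
    have hQk : ∀ k, k ≠ i → k ≠ j → ∀ a b, Q.ballot k a b ↔ P.ballot k a b := by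
      intro k hki hkj a b
      rw [hQdef, flipAt_ballot, if_neg hkj, flipAt_ballot, if_neg hki]
    apply pareto_congr
    intro a b hab
    by_cases h1 : a = u ∧ b = v
    · obtain ⟨rfl, rfl⟩ := h1
      constructor <;> intro h
      · have := h j hj
        exact ((hSWO j hj).1 b a hIj.1 this).elim
      · have := (hQi a b).mp (h i hi)
        exact (flipPair_self _ _ _ this).elim
    · by_cases h2 : a = v ∧ b = u
      · obtain ⟨rfl, rfl⟩ := h2
        constructor <;> intro h
        · have := h i hi
          exact ((hSWO i hi).1 b a hIi.1 this).elim
        · have := (hQj a b).mp (h j hj)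
          exact (flipPair_self _ _ _ this).elim
      · refine forall_congr' fun k => imp_congr_right fun hk => ?_
        by_cases hki : k = i
        · subst hki
          rw [hQi a b, flipPair_eq _ _ _ _ _ h1 h2]
        · by_cases hkj : k = j
          · subst hkj
            rw [hQj a b, flipPair_eq _ _ _ _ _ h2 h1]
          · rw [hQk k hki hkj a b]
  · -- TiebreakComp
    rintro P ⟨hne, hSWO⟩ i hi j hj hij Y Lo hTi hTj hLin _
    set Bi := breakTie (P.ballot i) Y Lo with hBidef
    set Bj := breakTie (P.ballot j) Y (fun a b => Lo b a) with hBjdef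
    set Q := (P.updBallot i Bi).updBallot j Bj with hQdef
    have hQj : ∀ a b, Q.ballot j a b ↔ Bj a b := by
      intro a b; rw [hQdef, updBallot_ballot, if_pos rfl]
    have hQi : ∀ a b, Q.ballot i a b ↔ Bi a b := by
      intro a b
      rw [hQdef, updBallot_ballot, if_neg hij, updBallot_ballot, if_pos rfl]
    have hQk : ∀ k, k ≠ i → k ≠ j → ∀ a b, Q.ballot k a b ↔ P.ballot k a b := by
      intro k hki hkj a b
      rw [hQdef, updBallot_ballot, if_neg hkj, updBallot_ballot, if_neg hki]
    apply pareto_congr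
    intro a b hab
    by_cases hY : a ∈ Y ∧ b ∈ Y
    · obtain ⟨haY, hbY⟩ := hY
      constructor <;> intro h
      · exact (hTi.2.1 a haY b hbY (h i hi)).elim
      · have hia := (hQi a b).mp (h i hi)
        have hja := (hQj a b).mp (h j hj)
        have hLab : Lo a b := by
          rcases hia with h' | ⟨_, _, h'⟩
          · exact (hTi.2.1 a haY b hbY h').elim
          · exact h'
        have hLba : Lo b a := by
          rcases hja with h' | ⟨_, _, h'⟩
          · exact (hTj.2.1 a haY b hbY h').elim
          · exact h'
        exact (hLin.2.1 a (hLin.2.2.1 a b a hLab hLba)).elim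
    · have hBieq : ∀ R : X → X → Prop, ∀ M : X → X → Prop,
          breakTie R Y M a b ↔ R a b := by
        intro R M
        unfold breakTie
        constructor
        · rintro (h' | ⟨ha, hb, _⟩)
          · exact h'
          · exact (hY ⟨ha, hb⟩).elim
        · exact Or.inl
      refine forall_congr' fun k => imp_congr_right fun hk => ?_
      by_cases hki : k = i
      · subst hki; rw [hQi a b, hBidef, hBieq]
      · by_cases hkj : k = j
        · subst hkj; rw [hQj a b, hBjdef, hBieq]
        · rw [hQk k hki hkj a b]
  · -- ¬ NeutralReversal
    intro hNR
    have := hNR P0 hP0 i1 i2 (by simpa [hP0def] using hi10) (by simpa [hP0def] using hi20)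
      (Ne.symm hi21) L hLlin hQ0
    exact hPQne this
  · -- ¬ MarginBased
    intro hMB
    exact hPQne (hMB P0 hP0 Q0 hQ0 hmargin)

end
end
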